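/- arXiv:2004.02800 — 6 statements merged into one kernel-verified Lean document; each statement's English description precedes it below -/
import Mathlib

section
/- Let T be a tree on the labelled vertex set {1,…,b} with b ≥ 2, let n ≥ b and 0 < p < 1. Let Φ₁, Φ : {1,…,b} → {1,…,n} be injections that are compatible, meaning that for all x, y in A = Im(Φ₁) ∩ Im(Φ), the pair {Φ₁⁻¹(x), Φ₁⁻¹(y)} is an edge of T if and only if {Φ⁻¹(x), Φ⁻¹(y)} is an edge of T. Suppose |A| = ℓ and the subgraph of T induced by Φ⁻¹(A) is a forest with k connected components (hence with ℓ − k edges). Then, conditional on the event that Φ₁ is an induced order-preserving copy of T (i.e. Φ₁(u)Φ₁(v) is an edge of G_{n,p} iff uv is an edge of T for all u,v), the probability that Φ is an induced order-preserving copy of T equals p^{b-1-(ℓ-k)} · (1-p)^{binom(b-1,2) − binom(ℓ,2) + (ℓ-k)}. -/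
open MeasureTheory Filter

/-- The Erdős–Rényi random graph measure `G(n,p)`: each potential edge (element of
`Sym2 (Fin n)`) is present independently with probability `p`. -/
noncomputable def gnp (n : ℕ) (p : ℝ) : Measure (Sym2 (Fin n) → Bool) :=
  Measure.pi fun _ => (PMF.bernoulli (min (Real.toNNReal p) 1) (min_le_right _ _)).toMeasure

/-- Adjacency in the random graph sample `ω`: distinct vertices joined by a present edge. -/
def gnpAdj {n : ℕ} (ω : Sym2 (Fin n) → Bool) (x y : Fin n) : Prop :=
  x ≠ y ∧ ω s(x, y) = true

/-- `Φ` is an order-preserving induced copy of `T` in the sample `ω`. -/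
def IsOrderedInducedCopy {b n : ℕ} (T : SimpleGraph (Fin b)) (Φ : Fin b → Fin n)
    (ω : Sym2 (Fin n) → Bool) : Prop :=
  ∀ u v : Fin b, gnpAdj ω (Φ u) (Φ v) ↔ T.Adj u v

/-- `Φ` is compatible with `Φ₁`: on the intersection of their images, pulling back by either
injection yields the same edges of `T`. -/
def Compatible {b n : ℕ} (T : SimpleGraph (Fin b)) (Φ₁ Φ : Fin b → Fin n) : Prop :=
  ∀ u v u' v' : Fin b, Φ₁ u = Φ u' → Φ₁ v = Φ v' → (T.Adj u v ↔ T.Adj u' v')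

/-!
Both events are cylinder events of the product measure: `Φ` is an induced copy of `T` exactly
when the sample agrees with the edges of `Φ(T)` on the pairs inside `Φ[b]`. Compatibility makes
the two prescriptions agree on the common pairs, those inside `A = Φ₁[b] ∩ Φ[b]`, so by
independence of the coordinates the conditional probability is the probability that the sample
agrees with `Φ(T)` on the `C(b,2) - C(ℓ,2)` pairs of `Φ[b]` not inside `A`. The edges of `Φ(T)`
among them are the `b - 1` edges of the tree minus the `ℓ - k` edges of the forest induced on `A`.
-/

open Set Function

namespace SimpleGraph

variable {V W : Type*}

lemma image_val_edgeSet_induce (G : SimpleGraph V) (s : Set V) :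
    Sym2.map Subtype.val '' (G.induce s).edgeSet = G.edgeSet ∩ s.sym2 := by
  ext ⟨x, y⟩
  simp only [mem_image, Sym2.exists, mem_edgeSet, comap_adj, Function.Embedding.subtype_apply,
    Sym2.map_mk, Sym2.eq_iff, mem_inter_iff, mk_mem_sym2_iff, Subtype.exists]
  aesop (add simp adj_comm)

lemma ncard_edgeSet_induce (G : SimpleGraph V) (s : Set V) :
    (G.induce s).edgeSet.ncard = (G.edgeSet ∩ s.sym2).ncard := by
  rw [← image_val_edgeSet_induce,
    ncard_image_of_injective _ (Sym2.map.injective Subtype.val_injective)]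

lemma map_mem_image_edgeSet_iff {f : V → W} (hf : Injective f) {G : SimpleGraph V}
    {e : Sym2 V} : Sym2.map f e ∈ Sym2.map f '' G.edgeSet ↔ e ∈ G.edgeSet :=
  (Sym2.map.injective hf).mem_set_image

lemma image_edgeSet_subset {f : V → W} (hf : Injective f) (G : SimpleGraph V) :
    Sym2.map f '' G.edgeSet ⊆ (⊤ : SimpleGraph W).edgeSet ∩ (range f).sym2 := by
  rintro _ ⟨e, he, rfl⟩
  induction e using Sym2.ind with | _ x y => ?_
  exact ⟨hf.ne (G.ne_of_adj he), by simp⟩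

lemma ncard_edgeSet_top [Finite V] :
    (⊤ : SimpleGraph V).edgeSet.ncard = (Nat.card V).choose 2 := by
  classical
  have := Fintype.ofFinite V
  rw [edgeSet_top, ← Nat.card_coe_set_eq, Nat.card_eq_fintype_card, Sym2.card_diagSet_compl,
    Nat.card_eq_fintype_card]

lemma ncard_edgeSet_top_inter_sym2 [Finite V] (s : Set V) :
    ((⊤ : SimpleGraph V).edgeSet ∩ s.sym2).ncard = s.ncard.choose 2 := by
  rw [← ncard_edgeSet_induce, induce_top, ncard_edgeSet_top, Nat.card_coe_set_eq]

lemma IsTree.ncard_edgeSet_add_one [Finite V] {G : SimpleGraph V} (hG : G.IsTree) :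
    G.edgeSet.ncard + 1 = Nat.card V := by
  rw [← Nat.card_coe_set_eq]
  exact (isTree_iff_connected_and_card.mp hG).2

lemma IsAcyclic.ncard_edgeSet_add_card_connectedComponent [Finite V] {G : SimpleGraph V}
    (hG : G.IsAcyclic) : G.edgeSet.ncard + Nat.card G.ConnectedComponent = Nat.card V := by
  have hV : Nat.card V = ∑ᶠ c : G.ConnectedComponent, c.supp.ncard := by
    rw [← Set.ncard_univ, ← iUnion_connectedComponentSupp,
      ncard_iUnion_of_finite (fun _ => toFinite _) G.pairwise_disjoint_supp_connectedComponent]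
  have hE : G.edgeSet.ncard = ∑ᶠ c : G.ConnectedComponent, (G.edgeSet ∩ c.supp.sym2).ncard := by
    rw [← ncard_iUnion_of_finite (fun _ => toFinite _)]
    · rw [← inter_iUnion, inter_eq_left.mpr]
      rintro ⟨x, y⟩ hxy
      refine mem_iUnion.mpr ⟨G.connectedComponentMk x, ?_⟩
      simp [ConnectedComponent.connectedComponentMk_eq_of_adj (G.mem_edgeSet.mp hxy)]
    · refine fun c c' hcc' => Disjoint.mono inter_subset_right inter_subset_right ?_
      rw [disjoint_iff_inter_eq_empty, ← sym2_inter,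
        (G.pairwise_disjoint_supp_connectedComponent hcc').inter_eq]
      exact sym2_empty
  have htree (c : G.ConnectedComponent) :
      (G.edgeSet ∩ c.supp.sym2).ncard + 1 = c.supp.ncard := by
    rw [← ncard_edgeSet_induce, ← Nat.card_coe_set_eq c.supp]
    exact (hG.isTree_connectedComponent c).ncard_edgeSet_add_one
  have := Fintype.ofFinite G.ConnectedComponent
  simp only [hV, hE, finsum_eq_sum_of_fintype, Nat.card_eq_fintype_card, Finset.card_univ.symm,
    Finset.card_eq_sum_ones, ← Finset.sum_add_distrib, htree]

lemma IsAcyclic.ncard_image_edgeSet_inter_sym2_add_card_connectedComponent [Finite V]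
    {f : V → W} (hf : Injective f) {G : SimpleGraph V} (hG : G.IsAcyclic) (s : Set W) :
    (Sym2.map f '' G.edgeSet ∩ s.sym2).ncard + Nat.card (G.induce (f ⁻¹' s)).ConnectedComponent =
      (f ⁻¹' s).ncard := by
  rw [← image_inter_preimage, ← sym2_preimage, ncard_image_of_injective _ (Sym2.map.injective hf),
    ← ncard_edgeSet_induce, (hG.induce _).ncard_edgeSet_add_card_connectedComponent,
    Nat.card_coe_set_eq]

end SimpleGraph

open SimpleGraph

def agreesOn {ι : Type*} (U W : Set ι) : Set (ι → Bool) := {ω | ∀ i ∈ U, ω i = true ↔ i ∈ W}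

section Cylinder

variable {ι : Type*} {U V W W₁ W₂ : Set ι}

lemma agreesOn_inter_agreesOn : agreesOn U W ∩ agreesOn V W = agreesOn (U ∪ V) W := by
  ext ω
  simp only [agreesOn, mem_inter_iff, mem_ofPred_eq, mem_union, or_imp, forall_and]

lemma agreesOn_congr (h : ∀ i ∈ U, i ∈ W₁ ↔ i ∈ W₂) : agreesOn U W₁ = agreesOn U W₂ := by
  ext ω
  exact forall₂_congr fun i hi => by rw [h i hi]

end Cylinder

set_option linter.deprecated false in
lemma bernoulli_toMeasure_setOf_eq_true_iff {p : ℝ} (hp0 : 0 ≤ p) (hp1 : p ≤ 1) (P : Prop)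
    [Decidable P] :
    (PMF.bernoulli (min (Real.toNNReal p) 1) (min_le_right _ _)).toMeasure {x | x = true ↔ P} =
      ENNReal.ofReal (if P then p else 1 - p) := by
  have hx : {x | x = true ↔ P} = {decide P} := by ext x; cases x <;> simp
  rw [hx, PMF.toMeasure_apply_singleton _ _ (measurableSet_singleton _), PMF.bernoulli_apply,
    min_eq_left (Real.toNNReal_le_one.mpr hp1)]
  by_cases hP : P
  · simp [hP, ENNReal.ofReal]
  · simp only [hP, decide_false, cond_false, if_false]
    change 1 - ENNReal.ofReal p = ENNReal.ofReal (1 - p)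
    rw [ENNReal.ofReal_sub 1 hp0, ENNReal.ofReal_one]

section RandomGraph

variable {n : ℕ} {p : ℝ}

instance : IsProbabilityMeasure (gnp n p) := by
  unfold gnp
  infer_instance

lemma gnp_agreesOn (hp0 : 0 ≤ p) (hp1 : p ≤ 1) (U W : Set (Sym2 (Fin n))) :
    gnp n p (agreesOn U W) =
      ENNReal.ofReal p ^ (U ∩ W).ncard * ENNReal.ofReal (1 - p) ^ (U \ W).ncard := by
  classical
  rw [show agreesOn U W = U.pi fun i => {x | x = true ↔ i ∈ W} from rfl, ← pi_univ_ite, gnp,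
    Measure.pi_pi]
  simp only [apply_ite (DFunLike.coe _), measure_univ,
    bernoulli_toMeasure_setOf_eq_true_iff hp0 hp1]
  rw [Finset.prod_ite, Finset.prod_const_one, mul_one]
  simp only [apply_ite ENNReal.ofReal]
  rw [Finset.prod_ite, Finset.prod_const, Finset.prod_const, ← ncard_coe_finset,
    ← ncard_coe_finset]
  congr 3 <;> ext <;> simp

lemma gnp_agreesOn_union (hp0 : 0 ≤ p) (hp1 : p ≤ 1) {U V : Set (Sym2 (Fin n))}
    (hUV : Disjoint U V) (W : Set (Sym2 (Fin n))) :
    gnp n p (agreesOn (U ∪ V) W) = gnp n p (agreesOn U W) * gnp n p (agreesOn V W) := by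
  simp only [gnp_agreesOn hp0 hp1, union_inter_distrib_right, union_sdiff_distrib,
    ncard_union_eq (hUV.mono inter_subset_left inter_subset_left),
    ncard_union_eq (hUV.mono sdiff_subset sdiff_subset), pow_add]
  ring

lemma gnp_agreesOn_ne_zero (hp0 : 0 < p) (hp1 : p < 1) (U W : Set (Sym2 (Fin n))) :
    gnp n p (agreesOn U W) ≠ 0 := by
  rw [gnp_agreesOn hp0.le hp1.le]
  exact mul_ne_zero (pow_ne_zero _ (by simpa using hp0)) (pow_ne_zero _ (by simpa using hp1))

lemma cond_gnp_agreesOn (hp0 : 0 < p) (hp1 : p < 1) {U V W₁ W₂ : Set (Sym2 (Fin n))}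
    (h : ∀ i ∈ U ∩ V, i ∈ W₁ ↔ i ∈ W₂) :
    ProbabilityTheory.cond (gnp n p) (agreesOn U W₁) (agreesOn V W₂) =
      gnp n p (agreesOn (V \ U) W₂) := by
  -- a single pattern prescribing `W₁` on `U` and `W₂` on `V`
  set W := U ∩ W₁ ∪ V ∩ W₂
  have h₁ : agreesOn U W₁ = agreesOn U W := agreesOn_congr fun i hi => by grind
  have h₂ : agreesOn V W₂ = agreesOn V W := agreesOn_congr fun i hi => by grind
  have h₃ : agreesOn (V \ U) W₂ = agreesOn (V \ U) W := agreesOn_congr fun i hi => by grind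
  rw [h₁, h₂, h₃, ProbabilityTheory.cond_apply (toFinite _).measurableSet,
    agreesOn_inter_agreesOn, ← union_sdiff_self,
    gnp_agreesOn_union hp0.le hp1.le disjoint_sdiff_right,
    ENNReal.inv_mul_cancel_left (gnp_agreesOn_ne_zero hp0 hp1 _ _) (measure_ne_top _ _)]

end RandomGraph

lemma ENNReal.ofReal_pow_mul_ofReal_pow {x y : ℝ} (hx : 0 ≤ x) (hy : 0 ≤ y) (a c : ℕ) :
    ENNReal.ofReal x ^ a * ENNReal.ofReal y ^ c = ENNReal.ofReal (x ^ (a : ℤ) * y ^ (c : ℤ)) := by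
  rw [zpow_natCast, zpow_natCast, ENNReal.ofReal_mul (pow_nonneg hx a), ENNReal.ofReal_pow hx,
    ENNReal.ofReal_pow hy]

section InducedCopy

variable {b n : ℕ} {T : SimpleGraph (Fin b)} {Φ₁ Φ : Fin b → Fin n}

lemma setOf_isOrderedInducedCopy (hΦ : Injective Φ) :
    {ω | IsOrderedInducedCopy T Φ ω} =
      agreesOn ((⊤ : SimpleGraph (Fin n)).edgeSet ∩ (range Φ).sym2) (Sym2.map Φ '' T.edgeSet) := by
  have hrange : (range Φ).sym2 = range (Sym2.map Φ) := by
    rw [← image_univ, sym2_image, sym2_univ, image_univ]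
  ext ω
  rw [inter_comm, hrange]
  simp only [mem_ofPred_eq, IsOrderedInducedCopy, agreesOn, gnpAdj, mem_inter_iff, and_imp,
    forall_mem_range, Sym2.forall, Sym2.map_mk, mem_edgeSet, top_adj]
  refine forall₂_congr fun u v => ?_
  rw [← Sym2.map_mk, map_mem_image_edgeSet_iff hΦ, mem_edgeSet]
  have : T.Adj u v → Φ u ≠ Φ v := fun h => hΦ.ne h.ne
  tauto

lemma Compatible.mem_image_edgeSet_iff (hcomp : Compatible T Φ₁ Φ) (hΦ₁ : Injective Φ₁)
    (hΦ : Injective Φ) {e : Sym2 (Fin n)} (he : e ∈ (range Φ₁).sym2 ∩ (range Φ).sym2) :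
    e ∈ Sym2.map Φ₁ '' T.edgeSet ↔ e ∈ Sym2.map Φ '' T.edgeSet := by
  induction e using Sym2.ind with | _ x y => ?_
  rw [mem_inter_iff, mk_mem_sym2_iff, mk_mem_sym2_iff] at he
  obtain ⟨⟨⟨u, rfl⟩, ⟨v, rfl⟩⟩, ⟨⟨u', hu⟩, ⟨v', hv⟩⟩⟩ := he
  calc s(Φ₁ u, Φ₁ v) ∈ Sym2.map Φ₁ '' T.edgeSet ↔ T.Adj u v :=
      map_mem_image_edgeSet_iff (e := s(u, v)) hΦ₁
    _ ↔ T.Adj u' v' := hcomp u v u' v' hu.symm hv.symm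
    _ ↔ s(Φ u', Φ v') ∈ Sym2.map Φ '' T.edgeSet :=
      (map_mem_image_edgeSet_iff (e := s(u', v')) hΦ).symm
    _ ↔ _ := by rw [hu, hv]

lemma cond_isOrderedInducedCopy {p : ℝ} (hp0 : 0 < p) (hp1 : p < 1) (hΦ₁ : Injective Φ₁)
    (hΦ : Injective Φ) (hcomp : Compatible T Φ₁ Φ) :
    ProbabilityTheory.cond (gnp n p) {ω | IsOrderedInducedCopy T Φ₁ ω}
        {ω | IsOrderedInducedCopy T Φ ω} =
      ENNReal.ofReal p ^ (Sym2.map Φ '' T.edgeSet \ (range Φ₁).sym2).ncard *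
        ENNReal.ofReal (1 - p) ^
          ((((⊤ : SimpleGraph (Fin n)).edgeSet ∩ (range Φ).sym2) \ (range Φ₁).sym2) \
            Sym2.map Φ '' T.edgeSet).ncard := by
  have hE := image_edgeSet_subset hΦ T
  rw [setOf_isOrderedInducedCopy hΦ₁, setOf_isOrderedInducedCopy hΦ,
    cond_gnp_agreesOn hp0 hp1 fun e he => hcomp.mem_image_edgeSet_iff hΦ₁ hΦ ⟨he.1.2, he.2.2⟩,
    gnp_agreesOn hp0.le hp1.le]
  congr 3 <;> ext e <;> have := @hE e <;> simp only [mem_inter_iff, Set.mem_sdiff] at this ⊢ <;>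
    tauto

end InducedCopy

theorem statement6_general (b n : ℕ)
    (p : ℝ) (hp0 : 0 < p) (hp1 : p < 1)
    (T : SimpleGraph (Fin b)) (hT : T.IsTree)
    (Φ₁ Φ : Fin b → Fin n) (hΦ₁ : Function.Injective Φ₁) (hΦ : Function.Injective Φ)
    (hcomp : Compatible T Φ₁ Φ) (ℓ k : ℕ)
    (hℓ : (Set.range Φ₁ ∩ Set.range Φ).ncard = ℓ)
    (hk : Nat.card (T.induce (Φ ⁻¹' (Set.range Φ₁ ∩ Set.range Φ))).ConnectedComponent = k) :
    ProbabilityTheory.cond (gnp n p) {ω | IsOrderedInducedCopy T Φ₁ ω}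
        {ω | IsOrderedInducedCopy T Φ ω}
      = ENNReal.ofReal (p ^ ((b : ℤ) - 1 - ((ℓ : ℤ) - (k : ℤ))) *
          (1 - p) ^ (((b - 1).choose 2 : ℤ) - (ℓ.choose 2 : ℤ) + ((ℓ : ℤ) - (k : ℤ)))) := by
  rw [cond_isOrderedInducedCopy hp0 hp1 hΦ₁ hΦ hcomp,
    ENNReal.ofReal_pow_mul_ofReal_pow hp0.le (sub_nonneg.2 hp1.le)]
  set E := Sym2.map Φ '' T.edgeSet
  set S := (⊤ : SimpleGraph (Fin n)).edgeSet ∩ (range Φ).sym2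
  have hES : E ⊆ S := image_edgeSet_subset hΦ T
  have hE : E.ncard + 1 = b := by
    rw [ncard_image_of_injective _ (Sym2.map.injective hΦ), hT.ncard_edgeSet_add_one, Nat.card_fin]
  have hS : S.ncard = b.choose 2 := by
    rw [ncard_edgeSet_top_inter_sym2, ncard_range_of_injective hΦ, Nat.card_fin]
  have hEk : (E ∩ (range Φ₁).sym2).ncard + k = ℓ := by
    rw [← hk, ← hℓ, ← ncard_preimage_of_injective_subset_range hΦ inter_subset_right,
      preimage_inter_range]
    exact hT.isAcyclic.ncard_image_edgeSet_inter_sym2_add_card_connectedComponent hΦ _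
  have hSℓ : (S ∩ (range Φ₁).sym2).ncard = ℓ.choose 2 := by
    rw [← hℓ, ← ncard_edgeSet_top_inter_sym2, inter_assoc, sym2_inter, inter_comm (range Φ₁).sym2]
  have hEsplit := ncard_inter_add_ncard_sdiff_eq_ncard E (range Φ₁).sym2
  have hSsplit := ncard_inter_add_ncard_sdiff_eq_ncard S (range Φ₁).sym2
  have hnew := ncard_inter_add_ncard_sdiff_eq_ncard (S \ (range Φ₁).sym2) E
  rw [sdiff_inter_right_comm, inter_eq_right.mpr hES] at hnew
  obtain ⟨m, rfl⟩ : ∃ m, b = m + 1 := ⟨E.ncard, hE.symm⟩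
  have hpascal : (m + 1).choose 2 = m + m.choose 2 := by
    rw [Nat.choose_succ_succ' m 1, Nat.choose_one_right]
  rw [Nat.add_sub_cancel]
  congr 3 <;> omega

theorem statement6 (b n : ℕ) (hb : 2 ≤ b) (hn : b ≤ n)
    (p : ℝ) (hp0 : 0 < p) (hp1 : p < 1)
    (T : SimpleGraph (Fin b)) (hT : T.IsTree)
    (Φ₁ Φ : Fin b → Fin n) (hΦ₁ : Function.Injective Φ₁) (hΦ : Function.Injective Φ)
    (hcomp : Compatible T Φ₁ Φ) (ℓ k : ℕ)
    (hℓ : (Set.range Φ₁ ∩ Set.range Φ).ncard = ℓ)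
    (hk : Nat.card (T.induce (Φ ⁻¹' (Set.range Φ₁ ∩ Set.range Φ))).ConnectedComponent = k) :
    ProbabilityTheory.cond (gnp n p) {ω | IsOrderedInducedCopy T Φ₁ ω}
        {ω | IsOrderedInducedCopy T Φ ω}
      = ENNReal.ofReal (p ^ ((b : ℤ) - 1 - ((ℓ : ℤ) - (k : ℤ))) *
          (1 - p) ^ (((b - 1).choose 2 : ℤ) - (ℓ.choose 2 : ℤ) + ((ℓ : ℤ) - (k : ℤ)))) :=
  statement6_general b n p hp0 hp1 T hT Φ₁ Φ hΦ₁ hΦ hcomp ℓ k hℓ hk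
end

section
/- Let T be a tree on the labelled vertex set {1,…,b} with maximum degree at most Δ, let n ≥ b, and fix an injection Φ₁ : {1,…,b} → {1,…,n}. For integers ℓ and k, let S(ℓ,k) be the number of injections Φ : {1,…,b} → {1,…,n} that are compatible with Φ₁ (i.e. for all x,y ∈ A = Im(Φ₁) ∩ Im(Φ), {Φ₁⁻¹(x),Φ₁⁻¹(y)} is an edge of T iff {Φ⁻¹(x),Φ⁻¹(y)} is an edge of T), such that |A| = ℓ and the subgraph of T induced by Φ⁻¹(A) is a forest with k connected components. Then S(ℓ,k) ≤ (n−b)_{b−ℓ} · binom(b,k)² · k! · binom(k+ℓ−1, ℓ) · (2^{2Δ}·Δ!)^{ℓ}. -/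
/-!
Put `B = Φ⁻¹(A)` and `ψ = Φ₁⁻¹ ∘ Φ` on `B`. Compatibility makes `ψ` an injective graph
homomorphism `T[B] → T`, and `Φ` is determined by the set of pairs `{(v, ψ v) | v ∈ B}`
together with its restriction to the complement of `B`, an injection of `b - ℓ` vertices into
the `n - b` points outside `Im Φ₁`. A connected component `K` of `T[B]` is swept out by a walk of
length `2 (|K| - 1)` from any of its vertices (insert a back-and-forth detour for each new vertex),
and the pair of walks `v ↦ v`, `v ↦ ψ v` is recorded by the two neighbour indices chosen at each
step, `Δ²` choices per step. Recording also the roots of the `k` components, their `ψ`-images and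
the component sizes gives the bound, because `Δ ^ 4 ≤ 2 ^ (2 Δ) Δ!`.
-/

open Finset Function

namespace SimpleGraph

variable {V W : Type*} {Δ : ℕ}

def IsPortNumbering (G : SimpleGraph V) (port : V → Fin Δ → V) : Prop :=
  ∀ ⦃u v⦄, G.Adj u v → ∃ i, port u i = v

theorem exists_isPortNumbering [Finite V] (G : SimpleGraph V)
    (hdeg : ∀ v, (G.neighborSet v).ncard ≤ Δ) :
    ∃ port : V → Fin Δ → V, G.IsPortNumbering port := by
  let nbrs : V → List V := fun u => (G.neighborSet u).toFinite.toFinset.toList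
  have hlen : ∀ u, (nbrs u).length ≤ Δ := fun u => by
    simpa [nbrs, Set.ncard_eq_toFinset_card _ (G.neighborSet u).toFinite] using hdeg u
  refine ⟨fun u i => (nbrs u).getD i u, fun u v huv => ?_⟩
  obtain ⟨i, hi, rfl⟩ := List.mem_iff_getElem.mp (by simpa [nbrs] using huv : v ∈ nbrs u)
  exact ⟨⟨i, hi.trans_le (hlen u)⟩, List.getD_eq_getElem _ _ hi⟩

def followPorts (portG : V → Fin Δ → V) (portH : W → Fin Δ → W) (start : V × W)
    (code : List (Fin Δ × Fin Δ)) : List (V × W) :=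
  code.scanl (fun x a => (portG x.1 a.1, portH x.2 a.2)) start

variable {G : SimpleGraph V}

theorem Walk.exists_followPorts_eq {V' : Type*} {G' : SimpleGraph V'} {H : SimpleGraph W}
    {portG : V → Fin Δ → V} {portH : W → Fin Δ → W}
    (hG : G.IsPortNumbering portG) (hH : H.IsPortNumbering portH) (f : G' →g G) (g : G' →g H)
    {x y : V'} (p : G'.Walk x y) :
    ∃ code, code.length = p.length ∧
      followPorts portG portH (f x, g x) code = p.support.map fun v => (f v, g v) := by
  induction p with
  | nil => exact ⟨[], rfl, rfl⟩
  | @cons x z y hxz q ih =>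
    obtain ⟨code, hlen, hcode⟩ := ih
    obtain ⟨i, hi⟩ := hG (f.map_adj hxz)
    obtain ⟨j, hj⟩ := hH (g.map_adj hxz)
    refine ⟨(i, j) :: code, by simp [hlen], ?_⟩
    rw [followPorts, List.scanl_cons, ← followPorts, hi, hj, hcode, support_cons, List.map_cons]

variable [DecidableEq V]

theorem Walk.exists_detour {u w x y : V} (p : G.Walk u w) (hx : x ∈ p.support)
    (hxy : G.Adj x y) :
    ∃ q : G.Walk u w, q.length = p.length + 2 ∧
      q.support.toFinset = insert y p.support.toFinset := by
  refine ⟨(p.takeUntil x hx).append (.cons hxy (.cons hxy.symm (p.dropUntil x hx))), ?_, ?_⟩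
  · conv_rhs => rw [← p.take_spec hx]
    simp only [Walk.length_append, Walk.length_cons]
    ring
  · conv_rhs => rw [← p.take_spec hx]
    ext z
    have hend := (p.takeUntil x hx).end_mem_support
    have hdrop := (p.dropUntil x hx).cons_tail_support.symm
    simp only [Walk.support_append, Walk.support_cons, List.tail_cons, List.mem_toFinset,
      List.mem_append, List.mem_cons, Finset.mem_insert]
    rw [hdrop, List.mem_cons, List.tail_cons]
    grind

theorem Walk.support_toFinset_subset {r x : V} (p : G.Walk r x) {K : Finset V}
    (hK : ∀ v, v ∈ K ↔ G.Reachable r v) : p.support.toFinset ⊆ K := fun v hv =>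
  (hK v).mpr ⟨p.takeUntil v (List.mem_toFinset.mp hv)⟩

theorem exists_walk_support_toFinset_eq {r : V} {K : Finset V}
    (hK : ∀ v, v ∈ K ↔ G.Reachable r v) :
    ∃ x, ∃ p : G.Walk r x, p.length = 2 * (#K - 1) ∧ p.support.toFinset = K := by
  have grow : ∀ m < #K, ∃ x, ∃ p : G.Walk r x,
      p.length = 2 * m ∧ #p.support.toFinset = m + 1 := by
    intro m
    induction m with
    | zero => exact fun _ => ⟨r, .nil, rfl, by simp⟩
    | succ m ih =>
      intro hm
      obtain ⟨x, p, hlen, hcard⟩ := ih (by omega)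
      obtain ⟨y, hyK, hyp⟩ := exists_mem_notMem_of_card_lt_card (s := p.support.toFinset)
        (by omega : _ < #K)
      obtain ⟨q⟩ := (hK y).mp hyK
      obtain ⟨d, -, hd₁, hd₂⟩ := q.exists_boundary_dart p.support.toFinset (by simp) hyp
      obtain ⟨p', hlen', hsupp'⟩ := p.exists_detour (List.mem_toFinset.mp hd₁) d.adj
      exact ⟨x, p', by omega, by rw [hsupp', card_insert_of_notMem hd₂, hcard]⟩
  have hK₀ : 0 < #K := card_pos.mpr ⟨r, (hK r).mpr .rfl⟩
  obtain ⟨x, p, hlen, hcard⟩ := grow (#K - 1) (by omega)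
  exact ⟨x, p, hlen, eq_of_subset_of_card_le (p.support_toFinset_subset hK) (by omega)⟩

theorem exists_componentRoots {V' : Type*} [Finite V'] (G' : SimpleGraph V') {f : V' → V}
    (hf : Injective f) :
    ∃ (R : Finset V) (x : R → V') (idx : V' → R), #R = Nat.card G'.ConnectedComponent ∧
      (∀ r, f (x r) = r) ∧ ∀ r v, idx v = r ↔ G'.Reachable (x r) v := by
  classical
  have := Fintype.ofFinite G'.ConnectedComponent
  let root : G'.ConnectedComponent → V' := Quot.out
  have hroot : ∀ c, G'.connectedComponentMk (root c) = c := Quot.out_eq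
  have hinj : Injective (f ∘ root) :=
    hf.comp fun c c' h => by rw [← hroot c, ← hroot c', h]
  let R := univ.image (f ∘ root)
  let comp : R → G'.ConnectedComponent := fun r => (mem_image.mp r.2).choose
  have hcomp : ∀ r, f (root (comp r)) = r := fun r => (mem_image.mp r.2).choose_spec.2
  refine ⟨R, root ∘ comp, fun v => ⟨f (root (G'.connectedComponentMk v)), mem_image_of_mem _
    (mem_univ _)⟩, by rw [card_image_of_injective _ hinj, card_univ, Nat.card_eq_fintype_card],
    hcomp, fun r v => ?_⟩
  rw [Subtype.ext_iff, ← hcomp r]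
  change (f ∘ root) _ = (f ∘ root) _ ↔ G'.Reachable (root (comp r)) v
  rw [hinj.eq_iff, ← ConnectedComponent.eq, hroot, eq_comm]

/-- `R` is the set of roots of the components, the embedding sends each root to its image in
`W`, `σ` counts each root as often as its component has vertices, and each root carries the
word of port pairs along a walk sweeping out its component. -/
abbrev ForestCode (V W : Type*) [DecidableEq V] (Δ k ℓ : ℕ) : Type _ :=
  Σ R : {R : Finset V // #R = k}, (R.1 ↪ W) ×
    Σ σ : Sym R.1 ℓ, ∀ r : R.1, List.Vector (Fin Δ × Fin Δ) (2 * ((σ : Multiset R.1).count r - 1))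

namespace ForestCode

theorem card_le [Fintype V] [Fintype W] [DecidableEq W] {M : ℕ} (hM : 1 ≤ M)
    (hΔ : Δ ^ 4 ≤ M) (k ℓ : ℕ) :
    Fintype.card (ForestCode V W Δ k ℓ) ≤
      (Fintype.card V).choose k * (Fintype.card W).descFactorial k * (k + ℓ - 1).choose ℓ *
        M ^ ℓ := by
  have hword : ∀ c, (Δ * Δ) ^ (2 * (c - 1)) ≤ M ^ c := fun c =>
    calc (Δ * Δ) ^ (2 * (c - 1)) = (Δ ^ 4) ^ (c - 1) := by rw [pow_mul, ← pow_mul]; ring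
      _ ≤ M ^ (c - 1) := Nat.pow_le_pow_left hΔ _
      _ ≤ M ^ c := Nat.pow_le_pow_right hM (Nat.sub_le c 1)
  have hwords : ∀ R : Finset V, ∀ σ : Sym R ℓ, Fintype.card (∀ r : R,
      List.Vector (Fin Δ × Fin Δ) (2 * ((σ : Multiset R).count r - 1))) ≤ M ^ ℓ := by
    intro R σ
    calc _ = ∏ r : R, (Δ * Δ) ^ (2 * ((σ : Multiset R).count r - 1)) := by
          simp only [Fintype.card_pi, card_vector, Fintype.card_prod, Fintype.card_fin]
      _ ≤ ∏ r : R, M ^ (σ : Multiset R).count r := prod_le_prod' fun r _ => hword _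
      _ = M ^ ℓ := by
          rw [prod_pow_eq_pow_sum, Multiset.sum_count_eq_card (fun a _ => mem_univ a),
            Sym.card_coe]
  rw [Fintype.card_sigma]
  calc _ ≤ ∑ _R : {R : Finset V // #R = k},
        (Fintype.card W).descFactorial k * ((k + ℓ - 1).choose ℓ * M ^ ℓ) := by
        refine sum_le_sum fun R _ => ?_
        rw [Fintype.card_prod, Fintype.card_embedding_eq, Fintype.card_coe, R.2,
          Fintype.card_sigma]
        gcongr
        calc _ ≤ ∑ _σ : Sym R.1 ℓ, M ^ ℓ := sum_le_sum fun σ _ => hwords R σ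
          _ = _ := by
            rw [sum_const, card_univ, Sym.card_sym_eq_choose, Fintype.card_coe, R.2, smul_eq_mul]
    _ = _ := by rw [sum_const, card_univ, Fintype.card_finset_len, smul_eq_mul]; ring

def decode [DecidableEq W] {k ℓ : ℕ} (portG : V → Fin Δ → V) (portH : W → Fin Δ → W)
    (c : ForestCode V W Δ k ℓ) : Finset (V × W) :=
  univ.biUnion fun r : c.1.1 => (followPorts portG portH (r, c.2.1 r) (c.2.2.2 r).toList).toFinset

theorem exists_decode_eq [DecidableEq W] {V' : Type*} [Fintype V'] {H : SimpleGraph W}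
    {G' : SimpleGraph V'} {portG : V → Fin Δ → V} {portH : W → Fin Δ → W}
    (hG : G.IsPortNumbering portG) (hH : H.IsPortNumbering portH) {f : G' →g G} {g : G' →g H}
    (hf : Injective f) (hg : Injective g) :
    ∃ c : ForestCode V W Δ (Nat.card G'.ConnectedComponent) (Nat.card V'),
      c.decode portG portH = univ.image fun v => (f v, g v) := by
  classical
  obtain ⟨R, x, idx, hR, hfx, hidx⟩ := exists_componentRoots G' hf
  let ρ : R ↪ W := ⟨fun r => g (x r), fun r r' h => Subtype.ext (by rw [← hfx r, ← hfx r', hg h])⟩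
  let σ : Sym R (Nat.card V') := ⟨univ.val.map idx, by simp [Nat.card_eq_fintype_card]⟩
  have hcount : ∀ r, (σ : Multiset R).count r = #{v | idx v = r} := fun r => by
    simp [σ, Multiset.count_map, Finset.card, Finset.filter_val, eq_comm]
  have hcode : ∀ r : R, ∃ code : List (Fin Δ × Fin Δ),
      code.length = 2 * ((σ : Multiset R).count r - 1) ∧
      (followPorts portG portH (r, ρ r) code).toFinset =
        ({v | idx v = r} : Finset V').image fun v => (f v, g v) := by
    intro r
    obtain ⟨y, p, hlen, hsupp⟩ :=
      exists_walk_support_toFinset_eq (K := {v | idx v = r}) fun v => by simpa using hidx r v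
    obtain ⟨code, hcl, hfollow⟩ := p.exists_followPorts_eq hG hH f g
    refine ⟨code, by rw [hcl, hlen, hcount], ?_⟩
    change (followPorts portG portH ((r : V), g (x r)) code).toFinset = _
    rw [← hfx r, hfollow, ← hsupp]
    ext; simp
  choose code hlen hcode using hcode
  refine ⟨⟨⟨R, hR⟩, ρ, σ, fun r => ⟨code r, hlen r⟩⟩, ?_⟩
  refine (biUnion_congr rfl fun r _ => hcode r).trans ?_
  ext
  simp only [mem_biUnion, mem_univ, true_and, mem_image, mem_filter]
  exact ⟨fun ⟨_, v, _, hv⟩ => ⟨v, hv⟩, fun ⟨v, hv⟩ => ⟨idx v, v, rfl, hv⟩⟩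

end ForestCode

end SimpleGraph

open SimpleGraph

section Overlap

variable {α β : Type*} [Fintype α] [DecidableEq β]

def overlapPairs (Φ₁ Φ : α → β) : Finset (α × α) := {p | Φ₁ p.2 = Φ p.1}

@[simp]
theorem mem_overlapPairs {Φ₁ Φ : α → β} {a w : α} :
    (a, w) ∈ overlapPairs Φ₁ Φ ↔ Φ₁ w = Φ a := by
  simp [overlapPairs]

variable [Fintype β] [DecidableEq α]

theorem card_injective_extensions_le (B : Finset α) (C : Finset β) (g : α → β) :
    #{Φ : α → β | Injective Φ ∧ (∀ a ∈ B, Φ a = g a) ∧ ∀ a ∉ B, Φ a ∉ C} ≤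
      (#Cᶜ).descFactorial #Bᶜ := by
  set S : Finset (α → β) := {Φ | Injective Φ ∧ (∀ a ∈ B, Φ a = g a) ∧ ∀ a ∉ B, Φ a ∉ C}
  have hS : ∀ Φ ∈ S, Injective Φ ∧ (∀ a ∈ B, Φ a = g a) ∧ ∀ a ∉ B, Φ a ∉ C := fun Φ h =>
    (mem_filter.mp h).2
  let restrict : S → ((Bᶜ : Finset α) ↪ (Cᶜ : Finset β)) := fun Φ =>
    ⟨fun a => ⟨Φ.1 a, mem_compl.mpr ((hS _ Φ.2).2.2 a (mem_compl.mp a.2))⟩,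
      fun a a' h => Subtype.ext ((hS _ Φ.2).1 (congrArg Subtype.val h))⟩
  have hrestrict : Injective restrict := by
    intro Φ Φ' h
    refine Subtype.ext (funext fun a => ?_)
    by_cases ha : a ∈ B
    · rw [(hS _ Φ.2).2.1 a ha, (hS _ Φ'.2).2.1 a ha]
    · exact congrArg Subtype.val (DFunLike.congr_fun h ⟨a, mem_compl.mpr ha⟩)
  calc #S = Fintype.card S := (Fintype.card_coe S).symm
    _ ≤ Fintype.card ((Bᶜ : Finset α) ↪ (Cᶜ : Finset β)) :=
        Fintype.card_le_of_injective _ hrestrict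
    _ = (#Cᶜ).descFactorial #Bᶜ := by
        rw [Fintype.card_embedding_eq, Fintype.card_coe, Fintype.card_coe]

theorem card_overlapPairs_fiber_le {Φ₁ Φ₀ : α → β} (hΦ₁ : Injective Φ₁) (hΦ₀ : Injective Φ₀)
    {ℓ : ℕ} (hℓ : (Set.range Φ₁ ∩ Set.range Φ₀).ncard = ℓ) :
    #{Φ | Injective Φ ∧ overlapPairs Φ₁ Φ = overlapPairs Φ₁ Φ₀} ≤
      (Fintype.card β - Fintype.card α).descFactorial (Fintype.card α - ℓ) := by
  set C : Finset β := univ.image Φ₁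
  set B : Finset α := {a | Φ₀ a ∈ C}
  have hB : #B = ℓ := by
    rw [← hℓ, ← Set.ncard_coe_finset, ← Set.ncard_preimage_of_injective_subset_range hΦ₀
      Set.inter_subset_right]
    congr 1
    ext a
    simp [B, C]
  have hsub : ({Φ | Injective Φ ∧ overlapPairs Φ₁ Φ = overlapPairs Φ₁ Φ₀} : Finset (α → β)) ⊆
      ({Φ | Injective Φ ∧ (∀ a ∈ B, Φ a = Φ₀ a) ∧ ∀ a ∉ B, Φ a ∉ C} : Finset (α → β)) := by
    intro Φ hΦ
    simp only [mem_filter, mem_univ, true_and] at hΦ ⊢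
    obtain ⟨hinj, hpairs⟩ := hΦ
    have key : ∀ a w, Φ₁ w = Φ a ↔ Φ₁ w = Φ₀ a := fun a w => by
      rw [← mem_overlapPairs, hpairs, mem_overlapPairs]
    refine ⟨hinj, fun a ha => ?_, fun a ha hC => ha ?_⟩
    · obtain ⟨w, -, hw⟩ := mem_image.mp (mem_filter.mp ha).2
      rw [← hw, (key a w).mpr hw]
    · obtain ⟨w, -, hw⟩ := mem_image.mp hC
      exact mem_filter.mpr ⟨mem_univ a, mem_image.mpr ⟨w, mem_univ w, (key a w).mp hw⟩⟩
  refine (card_le_card hsub).trans ((card_injective_extensions_le B C Φ₀).trans_eq ?_)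
  rw [card_compl, card_compl, hB, card_image_of_injective _ hΦ₁, card_univ]

theorem card_le_mul_card_image_overlapPairs {Φ₁ : α → β} (hΦ₁ : Injective Φ₁) {ℓ : ℕ}
    (S : Finset (α → β))
    (hS : ∀ Φ ∈ S, Injective Φ ∧ (Set.range Φ₁ ∩ Set.range Φ).ncard = ℓ) :
    #S ≤ (Fintype.card β - Fintype.card α).descFactorial (Fintype.card α - ℓ) *
      #(S.image (overlapPairs Φ₁)) := by
  refine card_le_mul_card_image _ _ fun P hP => ?_
  obtain ⟨Φ₀, hΦ₀, rfl⟩ := mem_image.mp hP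
  refine (card_le_card fun Φ hΦ => ?_).trans
    (card_overlapPairs_fiber_le hΦ₁ (hS Φ₀ hΦ₀).1 (hS Φ₀ hΦ₀).2)
  obtain ⟨hΦS, hΦP⟩ := mem_filter.mp hΦ
  exact mem_filter.mpr ⟨mem_univ Φ, (hS Φ hΦS).1, hΦP⟩

end Overlap

theorem pow_four_le_four_pow_mul_factorial (Δ : ℕ) : Δ ^ 4 ≤ 2 ^ (2 * Δ) * Δ.factorial := by
  induction Δ with
  | zero => simp
  | succ d ih =>
    rcases Nat.lt_or_ge d 2 with hd | hd
    · interval_cases d <;> decide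
    · calc (d + 1) ^ 4 = (d + 1) * (d + 1) ^ 3 := by ring
        _ ≤ (d + 1) * (2 * d) ^ 3 := by gcongr; omega
        _ = (d + 1) * (8 * d ^ 3) := by ring
        _ ≤ (d + 1) * (4 * d * d ^ 3) := by gcongr; omega
        _ = 4 * (d + 1) * d ^ 4 := by ring
        _ ≤ 4 * (d + 1) * (2 ^ (2 * d) * d.factorial) := by gcongr
        _ = 2 ^ (2 * (d + 1)) * (d + 1).factorial := by
          rw [Nat.factorial_succ, show 2 * (d + 1) = 2 * d + 2 by ring, pow_add]; ring

theorem Compatible.exists_decode_eq_overlapPairs {b n Δ k ℓ : ℕ} {T : SimpleGraph (Fin b)}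
    {port : Fin b → Fin Δ → Fin b} (hport : T.IsPortNumbering port) {Φ₁ Φ : Fin b → Fin n}
    (hΦ₁ : Injective Φ₁) (hΦ : Injective Φ) (hc : Compatible T Φ₁ Φ)
    (hℓ : (Set.range Φ₁ ∩ Set.range Φ).ncard = ℓ)
    (hk : Nat.card (T.induce (Φ ⁻¹' (Set.range Φ₁ ∩ Set.range Φ))).ConnectedComponent = k) :
    ∃ c : ForestCode (Fin b) (Fin b) Δ k ℓ, c.decode port port = overlapPairs Φ₁ Φ := by
  classical
  set s := Φ ⁻¹' (Set.range Φ₁ ∩ Set.range Φ)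
  let ψ : s → Fin b := fun v => (Equiv.ofInjective Φ₁ hΦ₁).symm ⟨Φ v, v.2.1⟩
  have hψ : ∀ v, Φ₁ (ψ v) = Φ v := fun v => Equiv.apply_ofInjective_symm hΦ₁ _
  let g : T.induce s →g T := ⟨ψ, fun {u v} huv => (hc _ _ u v (hψ u) (hψ v)).mpr huv⟩
  have hg : Injective g := fun u v h =>
    Subtype.ext (hΦ (by rw [← hψ u, ← hψ v]; exact congrArg Φ₁ h))
  obtain rfl : Nat.card s = ℓ := by
    rw [Nat.card_coe_set_eq, Set.ncard_preimage_of_injective_subset_range hΦ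
      Set.inter_subset_right, hℓ]
  subst hk
  obtain ⟨c, hc⟩ := ForestCode.exists_decode_eq hport hport
    (f := (Embedding.induce s).toHom) Subtype.val_injective hg
  refine ⟨c, hc.trans ?_⟩
  ext ⟨a, w⟩
  simp only [mem_image, mem_univ, true_and, mem_overlapPairs, Prod.mk.injEq]
  refine ⟨fun ⟨v, hva, hvw⟩ => hva ▸ hvw ▸ hψ v, fun h => ?_⟩
  exact ⟨⟨a, ⟨w, h⟩, a, rfl⟩, rfl, hΦ₁ ((hψ _).trans h.symm)⟩

theorem statement8_general (b n Δ : ℕ)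
    (T : SimpleGraph (Fin b))
    (hDeg : ∀ v, (T.neighborSet v).ncard ≤ Δ)
    (Φ₁ : Fin b → Fin n) (hΦ₁ : Function.Injective Φ₁) (ℓ k : ℕ) :
    Nat.card {Φ : Fin b → Fin n // Function.Injective Φ ∧ Compatible T Φ₁ Φ ∧
        (Set.range Φ₁ ∩ Set.range Φ).ncard = ℓ ∧
        Nat.card (T.induce (Φ ⁻¹' (Set.range Φ₁ ∩ Set.range Φ))).ConnectedComponent = k}
      ≤ (n - b).descFactorial (b - ℓ) * (b.choose k) ^ 2 * k.factorial *
        ((k + ℓ - 1).choose ℓ) * (2 ^ (2 * Δ) * Δ.factorial) ^ ℓ := by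
  classical
  obtain ⟨port, hport⟩ := T.exists_isPortNumbering hDeg
  rw [Nat.card_eq_fintype_card, Fintype.card_subtype]
  set S : Finset (Fin b → Fin n) := {Φ | Injective Φ ∧ Compatible T Φ₁ Φ ∧
    (Set.range Φ₁ ∩ Set.range Φ).ncard = ℓ ∧
    Nat.card (T.induce (Φ ⁻¹' (Set.range Φ₁ ∩ Set.range Φ))).ConnectedComponent = k}
  have hS : ∀ Φ ∈ S, _ := fun Φ hΦ => (mem_filter.mp hΦ).2
  have himage : S.image (overlapPairs Φ₁) ⊆ univ.image (ForestCode.decode (k := k) (ℓ := ℓ)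
      port port) := fun P hP => by
    obtain ⟨Φ, hΦ, rfl⟩ := mem_image.mp hP
    obtain ⟨hinj, hc, hℓ, hk⟩ := hS Φ hΦ
    obtain ⟨c, hc⟩ := hc.exists_decode_eq_overlapPairs hport hΦ₁ hinj hℓ hk
    exact hc ▸ mem_image_of_mem _ (mem_univ c)
  calc #S ≤ (n - b).descFactorial (b - ℓ) * #(S.image (overlapPairs Φ₁)) := by
        simpa using card_le_mul_card_image_overlapPairs hΦ₁ S fun Φ hΦ =>
          ⟨(hS Φ hΦ).1, (hS Φ hΦ).2.2.1⟩
    _ ≤ (n - b).descFactorial (b - ℓ) * Fintype.card (ForestCode (Fin b) (Fin b) Δ k ℓ) := by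
        gcongr
        exact (card_le_card himage).trans (card_image_le.trans card_univ.le)
    _ ≤ (n - b).descFactorial (b - ℓ) * (b.choose k * b.descFactorial k * (k + ℓ - 1).choose ℓ *
        (2 ^ (2 * Δ) * Δ.factorial) ^ ℓ) := by
        gcongr
        simpa using ForestCode.card_le (V := Fin b) (W := Fin b)
          (Nat.one_le_iff_ne_zero.mpr (by positivity))
          (pow_four_le_four_pow_mul_factorial Δ) k ℓ
    _ = _ := by rw [Nat.descFactorial_eq_factorial_mul_choose b k]; ring

theorem statement8 (b n Δ : ℕ) (hn : b ≤ n)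
    (T : SimpleGraph (Fin b)) (hT : T.IsTree)
    (hDeg : ∀ v, (T.neighborSet v).ncard ≤ Δ)
    (Φ₁ : Fin b → Fin n) (hΦ₁ : Function.Injective Φ₁) (ℓ k : ℕ) :
    Nat.card {Φ : Fin b → Fin n // Function.Injective Φ ∧ Compatible T Φ₁ Φ ∧
        (Set.range Φ₁ ∩ Set.range Φ).ncard = ℓ ∧
        Nat.card (T.induce (Φ ⁻¹' (Set.range Φ₁ ∩ Set.range Φ))).ConnectedComponent = k}
      ≤ (n - b).descFactorial (b - ℓ) * (b.choose k) ^ 2 * k.factorial *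
        ((k + ℓ - 1).choose ℓ) * (2 ^ (2 * Δ) * Δ.factorial) ^ ℓ :=
  statement8_general b n Δ T hDeg Φ₁ hΦ₁ ℓ k
end

section
/- Let p = p(n) satisfy n^{-1/2}(ln n)^{10/9} < p < 1/ln n, set c = np, h = 3·ln ln c/ln c, and b = ⌊(2−h)·(n·ln c)/c⌋. Then (n)_b · p^{b−1} · (1−p)^{binom(b−1,2)} → ∞ as n → ∞. -/
/-!
Write `t = log c` and `L = log t`, so that `h t = 3 L` and `b p ≤ (2 - h) t = 2 t - 3 L`.
Bounding `(n)_b ≥ (n + 1 - b)^b ≥ (n / 2)^b`, `p^(b-1) ≥ p^b` and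
`log (1 - p) ≥ -p - 2 p²`, the logarithm of the expectation is at least
`b (t - log 2) - (b² / 2)(p + 2 p²)`. Here `b² p / 2 ≤ b t - 3 b L / 2`, and `b² p² ≤ 2 b`
because `b p ≤ 2 t` and `t p ≤ p log n < 1`. What remains is
`b (3 L / 2 - log 2 - 2) ≥ L / 2`, so the expectation is at least `√(log c)`, which tends to
infinity with `c ≥ √n`.
-/

open Filter Real

lemma neg_sub_two_mul_sq_le_log_one_sub {p : ℝ} (hp : p ≤ 1 / 2) :
    -p - 2 * p ^ 2 ≤ log (1 - p) := by
  have h1p : 0 < 1 - p := by linarith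
  have hinv : (1 - p)⁻¹ ≤ 1 + p + 2 * p ^ 2 := by
    rw [inv_le_iff_one_le_mul₀' h1p]
    nlinarith [mul_nonneg (sq_nonneg p) (by linarith : (0 : ℝ) ≤ 1 - 2 * p)]
  linarith [one_sub_inv_le_log_of_pos h1p]

lemma cast_choose_two_pred_le (B : ℕ) : ((B - 1).choose 2 : ℝ) ≤ B ^ 2 / 2 := by
  calc ((B - 1).choose 2 : ℝ) ≤ ((B - 1 : ℕ) : ℝ) ^ 2 / 2 := by
        simpa using Nat.choose_le_pow_div (α := ℝ) 2 (B - 1)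
    _ ≤ B ^ 2 / 2 := by gcongr; exact_mod_cast Nat.sub_le B 1

lemma log_descFactorial_mul_pow_mul_pow_ge {n B : ℕ} {p : ℝ} (hp0 : 0 < p) (hp : p ≤ 1 / 2)
    (hB : B ≤ n) :
    B * log ((n + 1 - B) * p) - B ^ 2 / 2 * (p + 2 * p ^ 2) ≤
      log (n.descFactorial B * p ^ (B - 1) * (1 - p) ^ ((B - 1).choose 2)) := by
  have hm : (0 : ℝ) < n + 1 - B := by
    have : (B : ℝ) ≤ n := by exact_mod_cast hB
    linarith
  have hdesc : ((n + 1 - B : ℝ)) ^ B ≤ n.descFactorial B := by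
    have := Nat.pow_sub_le_descFactorial n B
    rw [← Nat.cast_le (α := ℝ), Nat.cast_pow, Nat.cast_sub (by omega)] at this
    simpa using this
  have hdesc0 : (0 : ℝ) < n.descFactorial B := by exact_mod_cast Nat.descFactorial_pos.2 hB
  have h1p : 0 < 1 - p := by linarith
  rw [log_mul (mul_pos hdesc0 (pow_pos hp0 _)).ne' (pow_pos h1p _).ne',
    log_mul hdesc0.ne' (pow_pos hp0 _).ne', log_pow, log_pow, log_mul hm.ne' hp0.ne']
  have hfact : B * log (n + 1 - B) ≤ log (n.descFactorial B) := by
    rw [← log_pow]; exact log_le_log (by positivity) hdesc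
  have hpow : B * log p ≤ (B - 1 : ℕ) * log p :=
    mul_le_mul_of_nonpos_right (by exact_mod_cast Nat.sub_le B 1) (log_nonpos hp0.le (by linarith))
  have hchoose : B ^ 2 / 2 * (-p - 2 * p ^ 2) ≤ ((B - 1).choose 2 : ℕ) * log (1 - p) :=
    calc B ^ 2 / 2 * (-p - 2 * p ^ 2) ≤ B ^ 2 / 2 * log (1 - p) :=
          mul_le_mul_of_nonneg_left (neg_sub_two_mul_sq_le_log_one_sub hp) (by positivity)
      _ ≤ ((B - 1).choose 2 : ℕ) * log (1 - p) :=
          mul_le_mul_of_nonpos_right (cast_choose_two_pred_le B) (log_nonpos h1p.le (by linarith))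
  linarith

lemma half_le_mul_log_sub {B p t L m : ℝ} (hB : 1 ≤ B) (hL : 3 ≤ L) (hp : 0 ≤ p)
    (hBp : B * p ≤ 2 * t - 3 * L) (htp : t * p ≤ 1) (hm : t - log 2 ≤ log m) :
    L / 2 ≤ B * log m - B ^ 2 / 2 * (p + 2 * p ^ 2) := by
  have hBp0 : 0 ≤ B * p := by positivity
  have hsq : B ^ 2 * p ^ 2 ≤ 2 * B :=
    calc B ^ 2 * p ^ 2 = (B * p) * (B * p) := by ring
      _ ≤ (B * p) * (2 * t) := mul_le_mul_of_nonneg_left (by linarith) hBp0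
      _ = 2 * B * (t * p) := by ring
      _ ≤ 2 * B := by nlinarith
  have hlog2 : log 2 < 1 := by linarith [log_two_lt_d9]
  have hlogm : B * (t - log 2) ≤ B * log m := mul_le_mul_of_nonneg_left hm (by linarith)
  have hlin : B * (B * p) ≤ B * (2 * t - 3 * L) := mul_le_mul_of_nonneg_left hBp (by linarith)
  have hrest : L / 2 ≤ B * (3 * L / 2 - log 2 - 2) := by nlinarith
  nlinarith

lemma floor_two_sub_mul_div_bounds {n B : ℕ} {p c t L : ℝ} (hc : c = n * p) (hp0 : 0 < p)
    (hL : 0 ≤ L) (hLt : 3 * L ≤ t) (hpt : p ≤ t) (htc : 4 * t ≤ c)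
    (hB : B = ⌊(2 - 3 * L / t) * (n * t) / c⌋₊) :
    1 ≤ B ∧ B * p ≤ 2 * t - 3 * L ∧ 2 * B ≤ n := by
  have ht : 0 < t := hp0.trans_le hpt
  have hx : (2 - 3 * L / t) * (n * t) / c = (2 * t - 3 * L) / p := by
    have hn : (n : ℝ) ≠ 0 := by intro hn; rw [hn, zero_mul] at hc; linarith
    rw [hc]; field_simp
  rw [hx] at hB
  have hx0 : 0 ≤ (2 * t - 3 * L) / p := div_nonneg (by linarith) hp0.le
  have hBx : (B : ℝ) ≤ (2 * t - 3 * L) / p := hB ▸ Nat.floor_le hx0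
  refine ⟨hB ▸ Nat.le_floor ?_, (le_div_iff₀ hp0).1 hBx, ?_⟩
  · rw [Nat.cast_one, le_div_iff₀ hp0]; linarith
  · have : ((2 * B : ℕ) : ℝ) ≤ n := by
      have := (le_div_iff₀ hp0).1 hBx
      push_cast; nlinarith
    exact_mod_cast this

theorem exp_half_log_log_le_expected_tree_count {n B : ℕ} {p c h : ℝ} (hp0 : 0 < p)
    (hp : p ≤ 1 / 2) (hpn : p * log n ≤ 1) (hc : c = n * p) (hL : 3 ≤ log (log c))
    (hLt : 3 * log (log c) ≤ log c) (htc : 4 * log c ≤ c)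
    (hh : h = 3 * log (log c) / log c) (hB : B = ⌊(2 - h) * (n * log c) / c⌋₊) :
    exp (log (log c) / 2) ≤
      n.descFactorial B * p ^ (B - 1) * (1 - p) ^ ((B - 1).choose 2) := by
  have hc0 : 0 < c := by linarith
  have htp : log c * p ≤ 1 :=
    calc log c * p ≤ log n * p := by
          gcongr
          rw [hc]; nlinarith [(Nat.cast_nonneg n : (0 : ℝ) ≤ n)]
      _ ≤ 1 := by linarith
  obtain ⟨hB1, hBp, hBn⟩ :=
    floor_two_sub_mul_div_bounds hc hp0 (by linarith) hLt (by linarith) htc (hh ▸ hB)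
  have hBn' : (2 * B : ℝ) ≤ n := by exact_mod_cast hBn
  have hm : log c - log 2 ≤ log ((n + 1 - B) * p) := by
    rw [← log_div hc0.ne' two_ne_zero]
    exact log_le_log (by positivity) (by rw [hc]; nlinarith)
  have hpos : (0 : ℝ) < n.descFactorial B * p ^ (B - 1) * (1 - p) ^ ((B - 1).choose 2) := by
    have : (0 : ℝ) < n.descFactorial B := by exact_mod_cast Nat.descFactorial_pos.2 (by omega)
    have : 0 < 1 - p := by linarith
    positivity
  rw [← le_log_iff_exp_le hpos]
  exact (half_le_mul_log_sub (by exact_mod_cast hB1) hL hp0.le hBp htp hm).trans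
    (log_descFactorial_mul_pow_mul_pow_ge hp0 hp (by omega))

lemma eventually_const_mul_log_le {k : ℝ} (hk : 0 < k) : ∀ᶠ x in atTop, k * log x ≤ x := by
  filter_upwards [isLittleO_log_id_atTop.bound (inv_pos.2 hk), eventually_ge_atTop 0]
    with x hlog hx
  rw [norm_eq_abs, id, norm_eq_abs, abs_of_nonneg hx] at hlog
  calc k * log x ≤ k * |log x| := mul_le_mul_of_nonneg_left (le_abs_self _) hk.le
    _ ≤ k * (k⁻¹ * x) := mul_le_mul_of_nonneg_left hlog hk.le
    _ = x := by field_simp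

lemma edge_prob_bounds {n : ℕ} {p : ℝ} (hn : 2 ≤ log n)
    (hlow : (n : ℝ) ^ (-(1 : ℝ) / 2) * log n ^ ((10 : ℝ) / 9) < p) (hup : p < 1 / log n) :
    0 < p ∧ p ≤ 1 / 2 ∧ p * log n ≤ 1 ∧ (n : ℝ) ^ ((1 : ℝ) / 2) ≤ n * p := by
  have hn0 : (0 : ℝ) < n := Nat.cast_pos.2 (Nat.pos_of_ne_zero fun h0 => by norm_num [h0] at hn)
  have hpn : p * log n ≤ 1 := by
    have := (lt_div_iff₀ (by linarith)).1 hup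
    linarith
  have hsqrt : (n : ℝ) ^ (-(1 : ℝ) / 2) < p :=
    calc (n : ℝ) ^ (-(1 : ℝ) / 2) ≤ (n : ℝ) ^ (-(1 : ℝ) / 2) * log n ^ ((10 : ℝ) / 9) :=
          le_mul_of_one_le_right (by positivity) (one_le_rpow (by linarith) (by norm_num))
      _ < p := hlow
  refine ⟨(rpow_pos_of_pos hn0 _).trans hsqrt, by nlinarith, hpn, ?_⟩
  calc (n : ℝ) ^ ((1 : ℝ) / 2) = n * (n : ℝ) ^ (-(1 : ℝ) / 2) := by
        rw [show (1 : ℝ) / 2 = 1 + -(1 : ℝ) / 2 by norm_num, rpow_add hn0, rpow_one]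
    _ ≤ n * p := mul_le_mul_of_nonneg_left hsqrt.le hn0.le

theorem statement9 (p : ℕ → ℝ)
    (hp : ∀ᶠ n : ℕ in atTop,
      (n : ℝ) ^ (-(1 : ℝ)/2) * Real.log n ^ ((10 : ℝ)/9) < p n ∧ p n < 1 / Real.log n)
    (c h : ℕ → ℝ)
    (hc : ∀ n, c n = n * p n)
    (hh : ∀ n, h n = 3 * Real.log (Real.log (c n)) / Real.log (c n))
    (B : ℕ → ℕ)
    (hB : ∀ n, B n = ⌊(2 - h n) * ((n : ℝ) * Real.log (c n)) / c n⌋₊) :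
    Tendsto (fun n => (n.descFactorial (B n) : ℝ) * p n ^ (B n - 1) *
      (1 - p n) ^ ((B n - 1).choose 2)) atTop atTop := by
  have hbounds : ∀ᶠ n : ℕ in atTop,
      0 < p n ∧ p n ≤ 1 / 2 ∧ p n * log n ≤ 1 ∧ (n : ℝ) ^ ((1 : ℝ) / 2) ≤ c n := by
    filter_upwards [hp, (tendsto_log_atTop.comp tendsto_natCast_atTop_atTop).eventually_ge_atTop 2]
      with n hpn hn
    rw [hc n]
    exact edge_prob_bounds hn hpn.1 hpn.2
  have hc_lim : Tendsto c atTop atTop :=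
    tendsto_atTop_mono' _ (hbounds.mono fun _ hn => hn.2.2.2)
      ((tendsto_rpow_atTop (by norm_num)).comp tendsto_natCast_atTop_atTop)
  have ht_lim := tendsto_log_atTop.comp hc_lim
  have hL_lim := tendsto_log_atTop.comp ht_lim
  refine tendsto_atTop_mono' _ ?_ (tendsto_exp_atTop.comp (hL_lim.atTop_div_const two_pos))
  filter_upwards [hbounds, hL_lim.eventually_ge_atTop 3,
    ht_lim.eventually (eventually_const_mul_log_le three_pos),
    hc_lim.eventually (eventually_const_mul_log_le four_pos)]
    with n hn hL hLt htc
  obtain ⟨hp0, hp2, hpn, -⟩ := hn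
  exact exp_half_log_log_le_expected_tree_count hp0 hp2 hpn (hc n) hL hLt htc (hh n) (hB n)
end

section
/- Let p = p(n) satisfy n^{-1/2}(ln n)^{10/9} < p < 1/ln n, set c = np, h = 3·ln ln c/ln c, and b = ⌊(2−h)·(n·ln c)/c⌋. Then for all sufficiently large n and every integer ℓ with 1 ≤ ℓ ≤ b: (n−b)_{b−ℓ}/(n)_{b} < (6/n)^{ℓ} · e^{−b²/n} < (6/n)^{ℓ}. -/
/-!
Write `m = b - ℓ`, so that `(n)_b = (n)_m (n - m)_ℓ`. Each factor `n - b - i` of `(n - b)_m` is at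
most `(n - i) e^{-b/n}`, so the ratio is at most `e^{-bm/n} / (n - m)_ℓ`. When `2b ≤ n` every
factor of `(n - m)_ℓ` exceeds `n/2`, and `e^{-bm/n} = e^{-b²/n} e^{ℓb/n} < e^{-b²/n} 3^ℓ`, which
gives the constant `6 = 2 · 3`. The hypothesis on `p` makes `c > √n`, hence
`b ≤ 2n ln c / c ≤ 2√n ln n ≤ n/2` for large `n`.
-/

open Filter Real

lemma sub_sub_le_mul_exp_neg_div {x b i : ℝ} (hx : 0 < x) (hb : 0 ≤ b) (hi : 0 ≤ i)
    (hix : i ≤ x) : x - b - i ≤ (x - i) * exp (-b / x) := by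
  have hlin : x - b - i + b * i / x = (x - i) * (-b / x + 1) := by field_simp; ring
  calc x - b - i ≤ x - b - i + b * i / x := le_add_of_nonneg_right (by positivity)
    _ = (x - i) * (-b / x + 1) := hlin
    _ ≤ (x - i) * exp (-b / x) :=
      mul_le_mul_of_nonneg_left (add_one_le_exp _) (sub_nonneg.mpr hix)

lemma descFactorial_sub_le_mul_exp {n b : ℕ} (hn : 0 < n) :
    ∀ m, b + m ≤ n →
      ((n - b).descFactorial m : ℝ) ≤ n.descFactorial m * exp (-(b * m) / n)
  | 0, _ => by simp
  | m + 1, hbm => by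
    have ih := descFactorial_sub_le_mul_exp (b := b) hn m (by omega)
    have hfactor : ((n - b - m : ℕ) : ℝ) ≤ ((n - m : ℕ) : ℝ) * exp (-b / n) := by
      rw [Nat.cast_sub (by omega), Nat.cast_sub (by omega), Nat.cast_sub (by omega)]
      exact sub_sub_le_mul_exp_neg_div (by positivity) (by positivity) (by positivity)
        (by exact_mod_cast (by omega : m ≤ n))
    have hexp : exp (-(b * ((m + 1 : ℕ) : ℝ)) / n) = exp (-b / n) * exp (-(b * m) / n) := by
      rw [← exp_add]; congr 1; push_cast; ring
    rw [Nat.descFactorial_succ, Nat.descFactorial_succ, hexp]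
    push_cast
    calc ((n - b - m : ℕ) : ℝ) * (n - b).descFactorial m
        ≤ (((n - m : ℕ) : ℝ) * exp (-b / n)) * (n.descFactorial m * exp (-(b * m) / n)) :=
          mul_le_mul hfactor ih (by positivity) (by positivity)
      _ = _ := by ring

lemma half_pow_le_descFactorial {n m ℓ : ℕ} (h : 2 * (m + ℓ) ≤ n) :
    ((n : ℝ) / 2) ^ ℓ ≤ (n - m).descFactorial ℓ := by
  have hfactor : (n : ℝ) / 2 ≤ ((n - m + 1 - ℓ : ℕ) : ℝ) := by
    rw [div_le_iff₀ two_pos]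
    exact_mod_cast (by omega : n ≤ (n - m + 1 - ℓ) * 2)
  calc ((n : ℝ) / 2) ^ ℓ ≤ ((n - m + 1 - ℓ : ℕ) : ℝ) ^ ℓ :=
        pow_le_pow_left₀ (by positivity) hfactor ℓ
    _ ≤ (n - m).descFactorial ℓ := by exact_mod_cast Nat.pow_sub_le_descFactorial (n - m) ℓ

lemma exp_mul_div_lt_three_pow {n b ℓ : ℕ} (hℓ : ℓ ≠ 0) (hbn : b ≤ n) :
    exp (ℓ * b / n) < 3 ^ ℓ := by
  have hle : (ℓ * b / n : ℝ) ≤ ℓ := by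
    rcases Nat.eq_zero_or_pos n with rfl | hn
    · simp
    rw [div_le_iff₀ (by positivity)]
    exact mul_le_mul_of_nonneg_left (by exact_mod_cast hbn) (by positivity)
  calc exp (ℓ * b / n) ≤ exp ℓ := exp_le_exp.mpr hle
    _ = exp 1 ^ ℓ := by rw [← exp_nat_mul, mul_one]
    _ < 3 ^ ℓ := pow_lt_pow_left₀ exp_one_lt_three (exp_pos 1).le hℓ

theorem descFactorial_sub_div_descFactorial_lt {n b ℓ : ℕ} (hℓ : 1 ≤ ℓ) (hℓb : ℓ ≤ b)
    (hbn : 2 * b ≤ n) :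
    ((n - b).descFactorial (b - ℓ) : ℝ) / n.descFactorial b
      < (6 / n) ^ ℓ * exp (-(b : ℝ) ^ 2 / n) := by
  have hn : 0 < n := by omega
  have hsplit : ((n - (b - ℓ)).descFactorial ℓ * n.descFactorial (b - ℓ) : ℕ)
      = n.descFactorial b := by
    rw [← Nat.descFactorial_mul_descFactorial (Nat.sub_le b ℓ), Nat.sub_sub_self hℓb]
  have hD : (0 : ℝ) < n.descFactorial (b - ℓ) := by
    exact_mod_cast Nat.descFactorial_pos.mpr (by omega)
  have hexp : exp (-(b * ((b - ℓ : ℕ) : ℝ)) / n) = exp (-(b : ℝ) ^ 2 / n) * exp (ℓ * b / n) := by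
    rw [← exp_add, Nat.cast_sub hℓb]; congr 1; ring
  rw [← hsplit, Nat.cast_mul]
  calc ((n - b).descFactorial (b - ℓ) : ℝ)
        / ((n - (b - ℓ)).descFactorial ℓ * n.descFactorial (b - ℓ))
      ≤ n.descFactorial (b - ℓ) * exp (-(b * ((b - ℓ : ℕ) : ℝ)) / n)
        / (((n : ℝ) / 2) ^ ℓ * n.descFactorial (b - ℓ)) := by
        gcongr
        · exact descFactorial_sub_le_mul_exp hn _ (by omega)
        · exact half_pow_le_descFactorial (by omega)
    _ = exp (-(b : ℝ) ^ 2 / n) * exp (ℓ * b / n) / ((n : ℝ) / 2) ^ ℓ := by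
        rw [hexp]; field_simp
    _ < exp (-(b : ℝ) ^ 2 / n) * 3 ^ ℓ / ((n : ℝ) / 2) ^ ℓ := by
        gcongr; exact exp_mul_div_lt_three_pow (by omega) (by omega)
    _ = (6 / n) ^ ℓ * exp (-(b : ℝ) ^ 2 / n) := by
        rw [mul_div_assoc, ← div_pow]; ring_nf

lemma eventually_four_mul_log_le_sqrt : ∀ᶠ n : ℕ in atTop, 4 * log n ≤ √n := by
  have hbound := (isLittleO_log_rpow_atTop (by norm_num : (0 : ℝ) < 1 / 2)).bound
    (by norm_num : (0 : ℝ) < 1 / 4)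
  filter_upwards [tendsto_natCast_atTop_atTop.eventually hbound] with n hn
  rw [norm_eq_abs, norm_eq_abs, ← sqrt_eq_rpow, abs_of_nonneg (sqrt_nonneg _)] at hn
  linarith [le_abs_self (log n)]

lemma sqrt_lt_mul_of_rpow_neg_half_mul_lt {x L q : ℝ} (hx : 0 < x) (hL : 1 ≤ L)
    (hq : x ^ (-(1 : ℝ) / 2) * L < q) : √x < x * q := by
  have hsqrt : x * x ^ (-(1 : ℝ) / 2) = √x := by
    rw [neg_div, rpow_neg hx.le, ← sqrt_eq_rpow, ← div_eq_mul_inv, div_sqrt]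
  calc √x ≤ x * (x ^ (-(1 : ℝ) / 2) * L) := by
        rw [← mul_assoc, hsqrt]; exact le_mul_of_one_le_right (sqrt_nonneg x) hL
    _ < x * q := mul_lt_mul_of_pos_left hq hx

lemma two_mul_log_div_le_half {x c : ℝ} (hx : 4 * log x ≤ √x) (hc : √x < c) (hcx : c ≤ x)
    (hx1 : 1 ≤ x) : 2 * (x * log c) / c ≤ x / 2 := by
  have hx0 : 0 < x := by linarith
  have hs : 0 < √x := sqrt_pos.mpr hx0
  have hlogx : 0 ≤ log x := log_nonneg hx1
  calc 2 * (x * log c) / c ≤ 2 * (x * log x) / √x := by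
        gcongr
        exact hs.trans hc
    _ = 2 * √x * log x := by
        rw [div_eq_iff hs.ne']; linear_combination (-2 * log x) * mul_self_sqrt hx0.le
    _ ≤ √x * √x / 2 := by nlinarith
    _ = x / 2 := by rw [mul_self_sqrt hx0.le]

lemma two_mul_floor_le {n : ℕ} {c : ℝ} (hn : 9 ≤ n) (hlog : 4 * log n ≤ √n) (hc : √n < c)
    (hcn : c ≤ n) :
    2 * ⌊(2 - 3 * log (log c) / log c) * (n * log c) / c⌋₊ ≤ n := by
  have hn' : (9 : ℝ) ≤ n := by exact_mod_cast hn
  have hc0 : 0 < c := (sqrt_nonneg _).trans_lt hc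
  have hlogc : 1 ≤ log c := (le_log_iff_exp_le hc0).mpr <| by
    linarith [exp_one_lt_three, le_sqrt_of_sq_le (show (3 : ℝ) ^ 2 ≤ n by linarith)]
  have hlogc0 : 0 ≤ log c := by linarith
  have hh0 : 0 ≤ 3 * log (log c) / log c := by have := log_nonneg hlogc; positivity
  have hfloor : (⌊(2 - 3 * log (log c) / log c) * (n * log c) / c⌋₊ : ℝ)
      ≤ 2 * (n * log c) / c := by
    refine (Nat.cast_le.mpr (Nat.floor_mono ?_)).trans (Nat.floor_le (by positivity))
    gcongr
    exact sub_le_self 2 hh0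
  have := hfloor.trans (two_mul_log_div_le_half hlog hc hcn (by linarith))
  exact_mod_cast (show ((2 * _ : ℕ) : ℝ) ≤ n by push_cast; linarith)

theorem statement12 (p : ℕ → ℝ)
    (hp : ∀ᶠ n : ℕ in atTop,
      (n : ℝ) ^ (-(1 : ℝ)/2) * Real.log n ^ ((10 : ℝ)/9) < p n ∧ p n < 1 / Real.log n)
    (c h : ℕ → ℝ)
    (hc : ∀ n, c n = n * p n)
    (hh : ∀ n, h n = 3 * Real.log (Real.log (c n)) / Real.log (c n))
    (B : ℕ → ℕ)
    (hB : ∀ n, B n = ⌊(2 - h n) * ((n : ℝ) * Real.log (c n)) / c n⌋₊) :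
    ∀ᶠ n : ℕ in atTop, ∀ ℓ : ℕ, 1 ≤ ℓ → ℓ ≤ B n →
      ((n - B n).descFactorial (B n - ℓ) : ℝ) / (n.descFactorial (B n) : ℝ)
          < (6 / n : ℝ) ^ ℓ * Real.exp (-(B n : ℝ) ^ 2 / n) ∧
        (6 / n : ℝ) ^ ℓ * Real.exp (-(B n : ℝ) ^ 2 / n) < (6 / n : ℝ) ^ ℓ := by
  filter_upwards [hp, eventually_ge_atTop 9, eventually_four_mul_log_le_sqrt]
    with n ⟨hp_lb, hp_ub⟩ hn9 hlog
  have hn : (9 : ℝ) ≤ n := by exact_mod_cast hn9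
  have hlogn : 1 ≤ log n := (le_log_iff_exp_le (by positivity)).mpr (by linarith [exp_one_lt_three])
  have hc_gt : √n < c n := hc n ▸
    sqrt_lt_mul_of_rpow_neg_half_mul_lt (by positivity) (one_le_rpow hlogn (by norm_num)) hp_lb
  have hc_le : c n ≤ n := hc n ▸ mul_le_of_le_one_right (by positivity)
    (hp_ub.le.trans ((div_le_one (by positivity)).mpr hlogn))
  have hBn : 2 * B n ≤ n := hB n ▸ hh n ▸ two_mul_floor_le hn9 hlog hc_gt hc_le
  intro ℓ hℓ hℓB
  refine ⟨descFactorial_sub_div_descFactorial_lt hℓ hℓB hBn,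
    mul_lt_of_lt_one_right (by positivity) ?_⟩
  have hB0 : (0 : ℝ) < B n := by exact_mod_cast hℓ.trans hℓB
  rw [exp_lt_one_iff, neg_div, neg_lt_zero]
  positivity
end

section
/- Let p = p(n) satisfy n^{-1/2}(ln n)^{10/9} < p < 1/ln n, set c = np, h = 3·ln ln c/ln c, and b = ⌊(2−h)·(n·ln c)/c⌋. Then for all sufficiently large n and every integer ℓ with 1 ≤ ℓ ≤ b: ((n−b)_{b−ℓ}/(n)_{b}) · p^{−ℓ} · (1−p)^{ℓ − binom(ℓ,2)} < 6^{ℓ} · c^{−ℓ + (1 + 1/ln n)·c·binom(ℓ,2)/(n·ln c)}. -/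
/-!
From `(n - b)_{b-ℓ} (n - b)^ℓ ≤ (n)_b` the left side is at most
`((n - b) p)^{-ℓ} (1 - p)^{-binom(ℓ,2)}`. Since `b p ≤ 2 ln c` and `12 ln c ≤ c` for large `n`,
`b ≤ n / 6`, so `(n - b) p ≥ 5c/6`. Next `(1 - p)^{-1} ≤ exp (p / (1 - p)) ≤ exp (p + 2p / ln n)`,
and the excess `p binom(ℓ,2) / ln n` is at most `ℓ` because `p binom(ℓ,2) ≤ ℓ ln c ≤ ℓ ln n`
for `ℓ ≤ b`. What remains is the constant `(6e/5)^ℓ < 6^ℓ`.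
-/

open Filter Real

theorem Nat.descFactorial_sub_mul_pow_le {n b l : ℕ} (hl : l ≤ b) :
    (n - b).descFactorial (b - l) * (n - b) ^ l ≤ n.descFactorial b := by
  rw [← Nat.descFactorial_mul_descFactorial hl]
  gcongr
  exact (Nat.pow_le_pow_left (by omega) l).trans (Nat.pow_sub_le_descFactorial n l)

theorem descFactorial_div_descFactorial_le {n b l : ℕ} (hl : l ≤ b) (hb : b < n) :
    ((n - b).descFactorial (b - l) : ℝ) / n.descFactorial b ≤ (((n : ℝ) - b) ^ l)⁻¹ := by
  have hpos : (0 : ℝ) < ((n : ℝ) - b) ^ l := pow_pos (by simp [hb]) l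
  rw [div_le_iff₀ (by exact_mod_cast Nat.descFactorial_pos.mpr hb.le), ← div_eq_inv_mul,
    le_div_iff₀ hpos, ← Nat.cast_sub hb.le]
  exact_mod_cast Nat.descFactorial_sub_mul_pow_le hl

theorem inv_one_sub_pow_le_exp {p : ℝ} (hp : p < 1) (k : ℕ) :
    ((1 - p) ^ k)⁻¹ ≤ exp (p / (1 - p) * k) := by
  have h : (1 - p)⁻¹ = p / (1 - p) + 1 := by field_simp [(sub_pos.mpr hp).ne']; ring
  have hpos : 0 ≤ p / (1 - p) + 1 := h ▸ (inv_pos.mpr (sub_pos.mpr hp)).le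
  rw [← inv_pow, mul_comm, exp_nat_mul, h]
  exact pow_le_pow_left₀ hpos (add_one_le_exp _) k

theorem div_one_sub_mul_le {p δ K L : ℝ} (hp : 0 ≤ p) (hpδ : p ≤ δ) (hδ : δ ≤ 1 / 2)
    (hK : 0 ≤ K) (hKL : δ * p * K ≤ L) : p / (1 - p) * K ≤ (1 + δ) * p * K + L := by
  have hfrac : p / (1 - p) ≤ p + 2 * δ * p := by
    rw [div_le_iff₀ (by linarith)]
    nlinarith [mul_nonneg hp (sub_nonneg.mpr hpδ),
      mul_nonneg (mul_nonneg hp hp) (by linarith : 0 ≤ 1 - 2 * δ)]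
  calc p / (1 - p) * K ≤ (p + 2 * δ * p) * K := mul_le_mul_of_nonneg_right hfrac hK
    _ = (1 + δ) * p * K + δ * p * K := by ring
    _ ≤ (1 + δ) * p * K + L := by linarith

theorem mul_choose_two_le {p L : ℝ} {ℓ : ℕ} (hp : 0 ≤ p) (h : p * ℓ ≤ 2 * L) :
    p * ℓ.choose 2 ≤ L * ℓ := by
  have hℓ : (0 : ℝ) ≤ ℓ := ℓ.cast_nonneg
  rw [Nat.cast_choose_two]
  nlinarith [mul_le_mul_of_nonneg_right h hℓ, mul_nonneg hp hℓ]

theorem descFactorial_div_mul_zpow_lt {n B ℓ : ℕ} {p δ : ℝ} (hp : 0 < p) (hpδ : p ≤ δ)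
    (hδ : δ ≤ 1 / 2) (hℓ : 1 ≤ ℓ) (hℓB : ℓ ≤ B) (hBn : 6 * B ≤ n)
    (hKL : δ * p * ℓ.choose 2 ≤ ℓ) :
    ((n - B).descFactorial (B - ℓ) : ℝ) / n.descFactorial B * p ^ (-(ℓ : ℤ)) *
        (1 - p) ^ ((ℓ : ℤ) - (ℓ.choose 2 : ℤ))
      < 6 ^ ℓ * (((n * p) ^ ℓ)⁻¹ * exp ((1 + δ) * p * ℓ.choose 2)) := by
  set k := ℓ.choose 2
  have hp1 : 0 < 1 - p := by linarith
  have hnB : 5 / 6 * (n * p) ≤ ((n : ℝ) - B) * p := by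
    have : (6 * B : ℝ) ≤ n := by exact_mod_cast hBn
    nlinarith
  have hnB0 : 0 < (n : ℝ) - B := sub_pos.mpr (by exact_mod_cast (show B < n by omega))
  have hnp : 0 < (n : ℝ) * p := mul_pos (by exact_mod_cast (show 0 < n by omega)) hp
  have hpow : p ^ (-(ℓ : ℤ)) * (1 - p) ^ ((ℓ : ℤ) - k) ≤ (p ^ ℓ)⁻¹ * ((1 - p) ^ k)⁻¹ := by
    rw [zpow_neg, zpow_sub₀ hp1.ne', zpow_natCast, zpow_natCast, zpow_natCast, div_eq_mul_inv]
    gcongr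
    exact mul_le_of_le_one_left (by positivity) (pow_le_one₀ hp1.le (by linarith))
  have hexp : ((1 - p) ^ k)⁻¹ ≤ exp ((1 + δ) * p * k) * exp 1 ^ ℓ := by
    rw [← exp_nat_mul, mul_one, ← exp_add]
    exact (inv_one_sub_pow_le_exp (by linarith) k).trans
      (exp_le_exp.mpr (div_one_sub_mul_le hp.le hpδ hδ k.cast_nonneg hKL))
  calc _ = ((n - B).descFactorial (B - ℓ) : ℝ) / n.descFactorial B *
        (p ^ (-(ℓ : ℤ)) * (1 - p) ^ ((ℓ : ℤ) - k)) := mul_assoc ..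
    _ ≤ (((n : ℝ) - B) ^ ℓ)⁻¹ * ((p ^ ℓ)⁻¹ * ((1 - p) ^ k)⁻¹) :=
      mul_le_mul (descFactorial_div_descFactorial_le hℓB (by omega)) hpow
        (mul_nonneg (zpow_nonneg hp.le _) (zpow_nonneg hp1.le _)) (by positivity)
    _ = ((((n : ℝ) - B) * p) ^ ℓ)⁻¹ * ((1 - p) ^ k)⁻¹ := by rw [mul_pow, mul_inv]; ring
    _ ≤ ((5 / 6 * (n * p)) ^ ℓ)⁻¹ * (exp ((1 + δ) * p * k) * exp 1 ^ ℓ) := by gcongr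
    _ = (6 / 5 * exp 1) ^ ℓ * (((n * p) ^ ℓ)⁻¹ * exp ((1 + δ) * p * k)) := by
      rw [mul_pow, mul_pow, mul_inv, ← inv_pow, show (5 / 6 : ℝ)⁻¹ = 6 / 5 by norm_num]; ring
    _ < 6 ^ ℓ * (((n * p) ^ ℓ)⁻¹ * exp ((1 + δ) * p * k)) := by
      gcongr
      linarith [exp_one_lt_d9]

theorem natFloor_two_sub_mul_div_mul_le {n p h L : ℝ} (hn : 0 < n) (hp : 0 < p) (hh : 0 ≤ h)
    (hL : 0 ≤ L) : (⌊(2 - h) * (n * L) / (n * p)⌋₊ : ℝ) * p ≤ 2 * L := by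
  have hle : (2 - h) * (n * L) / (n * p) ≤ 2 * L / p := by
    rw [mul_left_comm, mul_div_mul_left _ _ hn.ne']
    gcongr
    linarith
  have := (Nat.cast_le.mpr (Nat.floor_le_floor hle)).trans (Nat.floor_le (by positivity))
  rwa [le_div_iff₀ hp] at this

theorem rpow_neg_natCast_add_div_log {x : ℝ} (hx : 0 < x) (hlog : log x ≠ 0) (ℓ : ℕ) (y : ℝ) :
    x ^ (-(ℓ : ℝ) + y / log x) = (x ^ ℓ)⁻¹ * exp y := by
  rw [rpow_add hx, rpow_neg hx.le, rpow_natCast, rpow_def_of_pos hx, mul_div_cancel₀ _ hlog]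

theorem descFactorial_div_mul_zpow_lt_rpow {n B ℓ : ℕ} {p h : ℝ} (hlog_n : 2 ≤ log n)
    (hp : p < 1 / log n) (hc : exp 1 ≤ n * p) (hc_log : 12 * log (n * p) ≤ n * p) (hh : 0 ≤ h)
    (hB : B = ⌊(2 - h) * ((n : ℝ) * log (n * p)) / (n * p)⌋₊) (hℓ : 1 ≤ ℓ) (hℓB : ℓ ≤ B) :
    ((n - B).descFactorial (B - ℓ) : ℝ) / n.descFactorial B * p ^ (-(ℓ : ℤ)) *
        (1 - p) ^ ((ℓ : ℤ) - (ℓ.choose 2 : ℤ))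
      < 6 ^ ℓ * (n * p) ^ (-(ℓ : ℝ) +
          (1 + 1 / log n) * (n * p) * (ℓ.choose 2 : ℝ) / ((n : ℝ) * log (n * p))) := by
  have hn0 : (0 : ℝ) < n :=
    Nat.cast_pos.mpr (Nat.pos_of_ne_zero (by rintro rfl; norm_num at hlog_n))
  have hc0 : 0 < (n : ℝ) * p := (exp_pos 1).trans_le hc
  have hp0 : 0 < p := pos_of_mul_pos_right hc0 hn0.le
  have hlog_c : 1 ≤ log (n * p) := by rwa [le_log_iff_exp_le hc0]
  have hδ : 1 / log n ≤ 1 / 2 := one_div_le_one_div_of_le two_pos hlog_n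
  have hBp : B * p ≤ 2 * log (n * p) :=
    hB ▸ natFloor_two_sub_mul_div_mul_le hn0 hp0 hh (by linarith)
  have h6B : 6 * B ≤ n := by
    have : (6 * B : ℝ) * p ≤ n * p := by linarith
    exact_mod_cast le_of_mul_le_mul_right this hp0
  have hK : 1 / log n * p * ℓ.choose 2 ≤ ℓ := by
    have hℓp : p * ℓ ≤ 2 * log (n * p) :=
      (mul_le_mul_of_nonneg_left (Nat.cast_le.mpr hℓB) hp0.le).trans (by linarith)
    have hlog_le : log (n * p) ≤ log n := log_le_log hc0 (by nlinarith [hp.trans_le hδ])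
    rw [mul_assoc, one_div_mul_eq_div, div_le_iff₀ (by linarith), mul_comm (ℓ : ℝ)]
    exact (mul_choose_two_le hp0.le hℓp).trans (by gcongr)
  rw [show (1 + 1 / log n) * (n * p) * (ℓ.choose 2 : ℝ) / (n * log (n * p))
      = (1 + 1 / log n) * p * ℓ.choose 2 / log (n * p) by field_simp,
    rpow_neg_natCast_add_div_log hc0 (by linarith) ℓ]
  exact descFactorial_div_mul_zpow_lt hp0 hp.le hδ hℓ hℓB h6B hK

theorem tendsto_natCast_mul_atTop_of_rpow_le {p : ℕ → ℝ} {a : ℝ} (ha : a < 1)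
    (hp : ∀ᶠ n : ℕ in atTop, (n : ℝ) ^ (-a) ≤ p n) :
    Tendsto (fun n : ℕ => n * p n) atTop atTop := by
  refine tendsto_atTop_mono' _ ?_
    ((tendsto_rpow_atTop (by linarith : 0 < -a + 1)).comp tendsto_natCast_atTop_atTop)
  filter_upwards [hp, eventually_ge_atTop 1] with n hn hn1
  rw [Function.comp_apply, rpow_add_one (by positivity), mul_comm]
  exact mul_le_mul_of_nonneg_left hn n.cast_nonneg

theorem Filter.Tendsto.eventually_mul_log_le {α : Type*} {l : Filter α} {f : α → ℝ}
    (hf : Tendsto f l atTop) {C : ℝ} (hC : 0 < C) : ∀ᶠ x in l, C * Real.log (f x) ≤ f x := by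
  filter_upwards [hf.eventually (isLittleO_log_id_atTop.bound (inv_pos.mpr hC)),
    hf.eventually_ge_atTop 0] with x hx hx0
  rw [norm_eq_abs, norm_eq_abs, id, abs_of_nonneg hx0] at hx
  calc C * Real.log (f x) ≤ C * (C⁻¹ * f x) := by gcongr; exact (le_abs_self _).trans hx
    _ = f x := mul_inv_cancel_left₀ hC.ne' _

theorem statement13 (p : ℕ → ℝ)
    (hp : ∀ᶠ n : ℕ in atTop,
      (n : ℝ) ^ (-(1 : ℝ)/2) * Real.log n ^ ((10 : ℝ)/9) < p n ∧ p n < 1 / Real.log n)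
    (c h : ℕ → ℝ)
    (hc : ∀ n, c n = n * p n)
    (hh : ∀ n, h n = 3 * Real.log (Real.log (c n)) / Real.log (c n))
    (B : ℕ → ℕ)
    (hB : ∀ n, B n = ⌊(2 - h n) * ((n : ℝ) * Real.log (c n)) / c n⌋₊) :
    ∀ᶠ n : ℕ in atTop, ∀ ℓ : ℕ, 1 ≤ ℓ → ℓ ≤ B n →
      ((n - B n).descFactorial (B n - ℓ) : ℝ) / (n.descFactorial (B n) : ℝ) *
          p n ^ (-(ℓ : ℤ)) * (1 - p n) ^ ((ℓ : ℤ) - (ℓ.choose 2 : ℤ))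
        < 6 ^ ℓ * c n ^ (-(ℓ : ℝ) +
            (1 + 1 / Real.log n) * c n * (ℓ.choose 2 : ℝ) / ((n : ℝ) * Real.log (c n))) := by
  have hlog_n : ∀ᶠ n : ℕ in atTop, 2 ≤ log n :=
    (tendsto_log_atTop.comp tendsto_natCast_atTop_atTop).eventually_ge_atTop 2
  have hc_top : Tendsto c atTop atTop := by
    rw [funext hc]
    refine tendsto_natCast_mul_atTop_of_rpow_le (a := 1 / 2) (by norm_num) ?_
    filter_upwards [hp, hlog_n] with n hpn hlogn
    rw [← neg_div]
    exact (le_mul_of_one_le_right (by positivity) (one_le_rpow (by linarith) (by norm_num))).trans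
      hpn.1.le
  have hh0 : ∀ᶠ n in atTop, 0 ≤ h n := by
    filter_upwards [(tendsto_log_atTop.comp hc_top).eventually_ge_atTop 1] with n hn
    rw [hh n]
    exact div_nonneg (mul_nonneg zero_le_three (log_nonneg hn)) (zero_le_one.trans hn)
  filter_upwards [hp, hlog_n, hc_top.eventually_ge_atTop (exp 1),
    hc_top.eventually_mul_log_le (by norm_num : (0 : ℝ) < 12), hh0]
    with n hpn hlog_n hc_e hc_log hh0 ℓ hℓ hℓB
  rw [hc n] at hc_e hc_log ⊢
  exact descFactorial_div_mul_zpow_lt_rpow hlog_n hpn.2 hc_e hc_log hh0 (by rw [hB n, hc n])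
    hℓ hℓB
end

section
/- There exists C > 0 such that for all real c > C and all real n ≥ c, setting h = 3·ln ln c/ln c, the inequality 1 − (1 + 1/ln n)·(1 − h/2)·c^{−t} − t > 1.001·(ln ln c)/ln c holds for every real t with 0 < t ≤ 1 − 1.01·(ln ln c)/ln c. -/
/-!
Write `L = log c`, `m = log L` and `a = (1 + 1 / log n) (1 - 3m / (2L))`. As a function of `t`
the right-hand side `1 - a c^(-t) - t` is concave, so on `[0, T]`, `T = 1 - 1.01 m / L`, it is
bounded below by its values at the endpoints. At `t = 0` it is `1 - a ≥ 3m / (2L) - 1 / L`, which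
beats `1.001 m / L` as soon as `m > 2.01`. At `t = T` it is `1.01 m / L - a e^(1.01 m - L)`, and
`e^(1.01 m - L) ≤ L² e^(-L) ≤ 24 / L²` is negligible against `0.009 m / L`.
-/

open Real Set

lemma concaveOn_one_sub_mul_rpow_neg_sub {a c : ℝ} (ha : 0 ≤ a) (hc : 0 < c) :
    ConcaveOn ℝ univ fun t : ℝ => 1 - a * c ^ (-t) - t := by
  have hconv : ConvexOn ℝ univ fun t : ℝ => a * c ^ (-t) := by
    simpa only [rpow_neg hc.le, ← inv_rpow hc.le, smul_eq_mul] using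
      (convexOn_rpow_left (inv_pos.2 hc)).smul ha
  exact ((concaveOn_const 1 convex_univ).sub hconv).sub (concaveOn_id convex_univ)

lemma three_lt_log {L : ℝ} (hL : 6000 ≤ L) : 3 < log L := by
  rw [lt_log_iff_exp_lt (by linarith)]
  calc exp 3 = exp 1 ^ 3 := by rw [← exp_nat_mul]; norm_num
    _ < 2.7182818286 ^ 3 := by gcongr; exact exp_one_lt_d9
    _ < L := by norm_num; linarith

lemma log_le_half_self {L : ℝ} (hL : 4 ≤ L) : log L ≤ L / 2 := by
  rw [log_le_iff_le_exp (by linarith)]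
  nlinarith [quadratic_le_exp_of_nonneg (by linarith : 0 ≤ L / 2)]

lemma one_add_mul_one_sub_mem_Icc {L m u : ℝ} (hL : 1 ≤ L) (hm : 0 ≤ m) (hmL : m ≤ L / 2)
    (hu0 : 0 ≤ u) (hu : u ≤ 1 / L) : (1 + u) * (1 - 3 * m / L / 2) ∈ Icc 0 2 := by
  have hk0 : 0 ≤ 3 * m / L / 2 := by positivity
  have hk1 : 3 * m / L / 2 ≤ 1 := by
    rw [div_div, div_le_one (by positivity)]
    linarith
  have hu1 : u ≤ 1 := hu.trans (by rw [div_le_one (by linarith)]; exact hL)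
  constructor
  · exact mul_nonneg (by linarith) (by linarith)
  · calc (1 + u) * (1 - 3 * m / L / 2) ≤ (1 + u) * 1 :=
          mul_le_mul_of_nonneg_left (by linarith) (by linarith)
      _ ≤ 2 := by linarith

lemma lt_one_sub_one_add_mul_one_sub {L m u : ℝ} (hL : 0 < L) (hm : 2.01 < m) (hu0 : 0 ≤ u)
    (hu : u ≤ 1 / L) : 1.001 * m / L < 1 - (1 + u) * (1 - 3 * m / L / 2) := by
  have hk : 0 ≤ 3 * m / L / 2 := by positivity
  have hgap : 1.001 * m / L + 1 / L < 3 * m / L / 2 := by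
    rw [← add_div, div_div, div_lt_div_iff₀ hL (by positivity)]
    nlinarith
  nlinarith [mul_nonneg hu0 hk]

lemma lt_one_sub_mul_exp_neg_mul_sub {a L : ℝ} (hL : 6000 ≤ L) (ha : a ≤ 2) :
    1.001 * log L / L <
      1 - a * exp (L * -(1 - 1.01 * log L / L)) - (1 - 1.01 * log L / L) := by
  have hL0 : 0 < L := by linarith
  have hm := three_lt_log hL
  have hexp : exp (L * -(1 - 1.01 * log L / L)) ≤ L ^ 2 / exp L := by
    calc exp (L * -(1 - 1.01 * log L / L)) ≤ exp (2 * log L - L) := by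
          gcongr
          rw [mul_neg, mul_sub, mul_div_cancel₀ _ hL0.ne']
          linarith
      _ = L ^ 2 / exp L := by rw [exp_sub, ← log_rpow hL0, exp_log (by positivity)]; norm_cast
  have hquartic : L ^ 4 / 24 ≤ exp L := by
    simpa [Nat.factorial] using pow_div_factorial_le_exp (x := L) hL0.le 4
  have hsmall : a * exp (L * -(1 - 1.01 * log L / L)) < 0.009 * log L / L :=
    calc a * exp (L * -(1 - 1.01 * log L / L)) ≤ 2 * (L ^ 2 / exp L) :=
          mul_le_mul ha hexp (exp_pos _).le (by norm_num)
      _ ≤ 2 * (L ^ 2 / (L ^ 4 / 24)) := by gcongr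
      _ = 48 / L ^ 2 := by field_simp; ring
      _ < 0.009 * log L / L := by
          rw [div_lt_div_iff₀ (by positivity) hL0]
          nlinarith
  have hsplit : 1.01 * log L / L = 1.001 * log L / L + 0.009 * log L / L := by ring
  linarith

theorem statement16 : ∃ C : ℝ, 0 < C ∧
    ∀ c : ℝ, C < c → ∀ n : ℝ, c ≤ n →
      ∀ t : ℝ, 0 < t → t ≤ 1 - 1.01 * Real.log (Real.log c) / Real.log c →
        1.001 * Real.log (Real.log c) / Real.log c <
          1 - (1 + 1 / Real.log n) * (1 - (3 * Real.log (Real.log c) / Real.log c) / 2) *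
              c ^ (-t) - t := by
  refine ⟨exp 6000, exp_pos _, fun c hc n hn t ht0 ht1 => ?_⟩
  have hc0 : 0 < c := (exp_pos _).trans hc
  have hL : 6000 < log c := (lt_log_iff_exp_lt hc0).2 hc
  have hlog : log c ≤ log n := log_le_log hc0 hn
  have hu0 : 0 ≤ 1 / log n := div_nonneg zero_le_one (by linarith)
  have hu : 1 / log n ≤ 1 / log c := one_div_le_one_div_of_le (by linarith) hlog
  have hm := three_lt_log hL.le
  obtain ⟨ha0, ha2⟩ := one_add_mul_one_sub_mem_Icc (by linarith) (by linarith)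
    (log_le_half_self (by linarith)) hu0 hu
  have hmin := (concaveOn_one_sub_mul_rpow_neg_sub ha0 hc0).min_le_of_mem_Icc (mem_univ 0)
    (mem_univ (1 - 1.01 * log (log c) / log c)) ⟨ht0.le, ht1⟩
  simp only [neg_zero, rpow_zero, mul_one, sub_zero] at hmin
  have hleft := lt_one_sub_one_add_mul_one_sub (by linarith)
    ((by norm_num : (2.01 : ℝ) < 3).trans hm) hu0 hu
  have hright := lt_one_sub_mul_exp_neg_mul_sub hL.le ha2
  rw [← rpow_def_of_pos hc0] at hright
  exact (lt_min hleft hright).trans_le hmin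
end
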